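/- arXiv:2007.11041 — 12 statements merged into one kernel-verified Lean document; each statement's English description precedes it below -/
import Mathlib

section
/- For all nonnegative integers m and n with m + n odd, if E[|X|^{m+n}] < ∞ and x ↦ x^{m+n}·h_X(x) is Lebesgue integrable on (−∞, 0], then |E[X^m · err(X)^n]| ≤ ( E[X^{m+n}] − 2·∫_{−∞}^{0} x^{m+n}·h_X(x) dx ) · ε^n. -/
open MeasureTheory

private lemma integral_comp_neg_real (G : ℝ → ℝ) :
    ∫ x, G (-x) = ∫ x, G x :=
  (Measure.measurePreserving_neg (volume : Measure ℝ)).integral_comp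
    (Homeomorph.neg ℝ).measurableEmbedding G

private lemma integral_odd_zero (G : ℝ → ℝ) (hG : ∀ x, G (-x) = - G x) :
    ∫ x, G x = 0 := by
  have h1 : ∫ x, G (-x) = ∫ x, G x := integral_comp_neg_real G
  simp only [hG, integral_neg] at h1
  linarith

theorem exp_x_error_symm_mult
    {Ω : Type*} [MeasurableSpace Ω] (P : Measure Ω) [IsProbabilityMeasure P]
    (X : Ω → ℝ) (hX : Measurable X)
    (rd : ℝ → ℝ) (hrd : Measurable rd)
    (ε : ℝ) (hε : 0 ≤ ε) (hbound : ∀ x : ℝ, |rd x - x| ≤ ε * |x|)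
    (hodd : ∀ x : ℝ, rd x = -rd (-x))
    (fX : ℝ → ℝ) (hfX_nonneg : ∀ x, 0 ≤ fX x) (hfX_meas : Measurable fX)
    (hlaw : Measure.map X P = volume.withDensity (fun x => ENNReal.ofReal (fX x)))
    (m n : ℕ) (hmn : Odd (m + n))
    (hmom : Integrable (fun ω => |X ω| ^ (m + n)) P)
    (hint : IntegrableOn
      (fun x => x ^ (m + n) * (fX x - min (fX x) (fX (-x)))) (Set.Iic 0)) :
    |∫ ω, (X ω) ^ m * (rd (X ω) - X ω) ^ n ∂P|
      ≤ ((∫ ω, (X ω) ^ (m + n) ∂P)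
          - 2 * ∫ x in Set.Iic (0 : ℝ), x ^ (m + n) * (fX x - min (fX x) (fX (-x))))
        * ε ^ n := by
  set k := m + n with hk
  set F : ℝ → ℝ := fun x => x ^ m * (rd x - x) ^ n with hF
  set q : ℝ → ℝ := fun x => x ^ k with hq
  set a : ℝ → ℝ := fun x => |x| ^ k with ha
  set gm : ℝ → ℝ := fun x => min (fX x) (fX (-x)) with hgm
  set h : ℝ → ℝ := fun x => fX x - gm x with hh
  -- measurability
  have hFmeas : Measurable F := (measurable_id.pow_const m).mul
    ((hrd.sub measurable_id).pow_const n)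
  have hqmeas : Measurable q := measurable_id.pow_const k
  have hameas : Measurable a := measurable_id.abs.pow_const k
  have hgmmeas : Measurable gm := hfX_meas.min (hfX_meas.comp measurable_neg)
  have hhmeas : Measurable h := hfX_meas.sub hgmmeas
  -- pointwise facts
  have hgm_nonneg : ∀ x, 0 ≤ gm x := fun x => le_min (hfX_nonneg x) (hfX_nonneg (-x))
  have hgm_le : ∀ x, gm x ≤ fX x := fun x => min_le_left _ _
  have hh_nonneg : ∀ x, 0 ≤ h x := fun x => sub_nonneg.2 (hgm_le x)
  have hh_le : ∀ x, h x ≤ fX x := fun x => by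
    have := hgm_nonneg x; simp only [hh]; linarith
  have ha_nonneg : ∀ x, 0 ≤ a x := fun x => pow_nonneg (abs_nonneg x) k
  have haq : ∀ x, |q x| = a x := fun x => by simp [hq, ha, abs_pow]
  have hF_bound : ∀ x, |F x| ≤ ε ^ n * a x := by
    intro x
    have h1 : |F x| = |x| ^ m * |rd x - x| ^ n := by
      rw [hF]; rw [abs_mul, abs_pow, abs_pow]
    have h2 : |rd x - x| ^ n ≤ (ε * |x|) ^ n :=
      pow_le_pow_left₀ (abs_nonneg _) (hbound x) n
    calc |F x| = |x| ^ m * |rd x - x| ^ n := h1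
      _ ≤ |x| ^ m * (ε * |x|) ^ n := by
          exact mul_le_mul_of_nonneg_left h2 (pow_nonneg (abs_nonneg x) m)
      _ = ε ^ n * a x := by simp only [ha, hk, mul_pow, pow_add]; ring
  -- oddness
  have hErr : ∀ x : ℝ, rd (-x) - (-x) = -(rd x - x) := by
    intro x
    have h1 := hodd (-x)
    rw [neg_neg] at h1
    rw [h1]; ring
  have hneg1 : ((-1 : ℝ)) ^ k = -1 := Odd.neg_one_pow hmn
  have hFodd : ∀ x, F (-x) = - F x := by
    intro x
    have : F (-x) = ((-1 : ℝ)) ^ k * F x := by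
      simp only [hF, hErr x]
      rw [show (-x : ℝ) = (-1) * x from by ring,
        show -(rd x - x) = (-1 : ℝ) * (rd x - x) from by ring,
        mul_pow, mul_pow, hk, pow_add]
      ring
    rw [this, hneg1]; ring
  have hqodd : ∀ x, q (-x) = - q x := fun x => by
    simp only [hq]; rw [Odd.neg_pow hmn]
  have hgmeven : ∀ x, gm (-x) = gm x := fun x => by
    simp only [hgm, neg_neg]; exact min_comm _ _
  -- transfer integrals through the law
  have hdens : ∀ φ : ℝ → ℝ, Measurable φ →
      ∫ ω, φ (X ω) ∂P = ∫ x, fX x * φ x := by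
    intro φ hφ
    rw [← integral_map hX.aemeasurable hφ.aestronglyMeasurable, hlaw]
    have hcast : (fun x => ENNReal.ofReal (fX x))
        = fun x => ((Real.toNNReal (fX x) : NNReal) : ENNReal) := rfl
    rw [hcast, integral_withDensity_eq_integral_smul
      (hfX_meas.real_toNNReal) φ]
    congr 1; funext x
    simp [NNReal.smul_def, Real.coe_toNNReal _ (hfX_nonneg x)]
  -- integrability of the master dominating function
  have I_afX : Integrable (fun x => fX x * a x) volume := by
    have h1 : Integrable (fun x => a x) (Measure.map X P) := by
      rw [integrable_map_measure hameas.aestronglyMeasurable hX.aemeasurable]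
      exact hmom
    rw [hlaw] at h1
    have hcast : (fun x => ENNReal.ofReal (fX x))
        = fun x => ((Real.toNNReal (fX x) : NNReal) : ENNReal) := rfl
    rw [hcast, integrable_withDensity_iff_integrable_smul
      (hfX_meas.real_toNNReal)] at h1
    refine h1.congr (Filter.Eventually.of_forall fun x => ?_)
    simp [NNReal.smul_def, Real.coe_toNNReal _ (hfX_nonneg x)]
  have mono_int : ∀ (G : ℝ → ℝ) (C : ℝ), Measurable G →
      (∀ x, |G x| ≤ C * (fX x * a x)) → Integrable G volume := by
    intro G C hG hGb
    refine (I_afX.const_mul C).mono hG.aestronglyMeasurable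
      (Filter.Eventually.of_forall fun x => ?_)
    simp only [Real.norm_eq_abs]
    exact (hGb x).trans (le_abs_self _)
  have bnd_hF : ∀ x, |h x * F x| ≤ ε ^ n * (fX x * a x) := by
    intro x
    rw [abs_mul, abs_of_nonneg (hh_nonneg x)]
    calc h x * |F x| ≤ fX x * (ε ^ n * a x) :=
          mul_le_mul (hh_le x) (hF_bound x) (abs_nonneg _) (hfX_nonneg x)
      _ = ε ^ n * (fX x * a x) := by ring
  have bnd_gF : ∀ x, |gm x * F x| ≤ ε ^ n * (fX x * a x) := by
    intro x
    rw [abs_mul, abs_of_nonneg (hgm_nonneg x)]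
    calc gm x * |F x| ≤ fX x * (ε ^ n * a x) :=
          mul_le_mul (hgm_le x) (hF_bound x) (abs_nonneg _) (hgm_nonneg x |>.trans (hgm_le x))
      _ = ε ^ n * (fX x * a x) := by ring
  have I_hF : Integrable (fun x => h x * F x) volume :=
    mono_int _ (ε ^ n) (hhmeas.mul hFmeas) bnd_hF
  have I_gF : Integrable (fun x => gm x * F x) volume :=
    mono_int _ (ε ^ n) (hgmmeas.mul hFmeas) bnd_gF
  have bnd_hq : ∀ x, |h x * q x| ≤ 1 * (fX x * a x) := by
    intro x
    rw [abs_mul, abs_of_nonneg (hh_nonneg x), haq, one_mul]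
    exact mul_le_mul_of_nonneg_right (hh_le x) (ha_nonneg x)
  have bnd_gq : ∀ x, |gm x * q x| ≤ 1 * (fX x * a x) := by
    intro x
    rw [abs_mul, abs_of_nonneg (hgm_nonneg x), haq, one_mul]
    exact mul_le_mul_of_nonneg_right (hgm_le x) (ha_nonneg x)
  have bnd_ha : ∀ x, |h x * a x| ≤ 1 * (fX x * a x) := by
    intro x
    rw [abs_mul, abs_of_nonneg (hh_nonneg x), abs_of_nonneg (ha_nonneg x), one_mul]
    exact mul_le_mul_of_nonneg_right (hh_le x) (ha_nonneg x)
  have I_hq : Integrable (fun x => h x * q x) volume :=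
    mono_int _ 1 (hhmeas.mul hqmeas) bnd_hq
  have I_gq : Integrable (fun x => gm x * q x) volume :=
    mono_int _ 1 (hgmmeas.mul hqmeas) bnd_gq
  have I_ha : Integrable (fun x => h x * a x) volume :=
    mono_int _ 1 (hhmeas.mul hameas) bnd_ha
  -- decomposition fX = h + gm, and odd parts vanish
  have hfx_split : ∀ (φ : ℝ → ℝ), (fun x => fX x * φ x)
      = fun x => h x * φ x + gm x * φ x := by
    intro φ; funext x; simp only [hh]; ring
  have zero_gF : ∫ x, gm x * F x = 0 :=
    integral_odd_zero _ (fun x => by rw [hgmeven x, hFodd x]; ring)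
  have zero_gq : ∫ x, gm x * q x = 0 :=
    integral_odd_zero _ (fun x => by rw [hgmeven x, hqodd x]; ring)
  have eqF : ∫ x, fX x * F x = ∫ x, h x * F x := by
    rw [hfx_split F, integral_add I_hF I_gF, zero_gF, add_zero]
  have eqq : ∫ x, fX x * q x = ∫ x, h x * q x := by
    rw [hfx_split q, integral_add I_hq I_gq, zero_gq, add_zero]
  -- the half-line identity : ∫ h*a = ∫ h*q - 2 ∫_{Iic 0} h*q
  have hdiff : ∫ x, (h x * a x - h x * q x) = -2 * ∫ x in Set.Iic (0:ℝ), h x * q x := by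
    have hzero : ∀ x ∉ Set.Iic (0:ℝ), h x * a x - h x * q x = 0 := by
      intro x hx
      simp only [Set.mem_Iic, not_le] at hx
      have : a x = q x := by simp only [ha, hq, abs_of_pos hx]
      rw [this]; ring
    rw [← setIntegral_eq_integral_of_forall_compl_eq_zero hzero]
    have heq : Set.EqOn (fun x => h x * a x - h x * q x)
        (fun x => -2 * (h x * q x)) (Set.Iic 0) := by
      intro x hx
      have hxle : x ≤ 0 := hx
      have : a x = - q x := by
        simp only [ha, hq, abs_of_nonpos hxle]
        rw [Odd.neg_pow hmn]
      simp only [this]; ring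
    rw [setIntegral_congr_fun measurableSet_Iic heq, integral_const_mul]
  have hsplit_a : ∫ x, h x * a x = (∫ x, h x * q x) - 2 * ∫ x in Set.Iic (0:ℝ), h x * q x := by
    have hs : (∫ x, h x * a x) - ∫ x, h x * q x
        = -2 * ∫ x in Set.Iic (0:ℝ), h x * q x := by
      rw [← integral_sub I_ha I_hq]; exact hdiff
    linarith
  -- put it all together
  have eLHS : ∫ ω, (X ω) ^ m * (rd (X ω) - X ω) ^ n ∂P = ∫ x, h x * F x := by
    calc ∫ ω, (X ω) ^ m * (rd (X ω) - X ω) ^ n ∂P = ∫ ω, F (X ω) ∂P := rfl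
      _ = ∫ x, fX x * F x := hdens F hFmeas
      _ = ∫ x, h x * F x := eqF
  have eRHS : ∫ ω, (X ω) ^ k ∂P = ∫ x, h x * q x := by
    calc ∫ ω, (X ω) ^ k ∂P = ∫ ω, q (X ω) ∂P := rfl
      _ = ∫ x, fX x * q x := hdens q hqmeas
      _ = ∫ x, h x * q x := eqq
  have eIic : (∫ x in Set.Iic (0:ℝ), x ^ k * (fX x - min (fX x) (fX (-x))))
      = ∫ x in Set.Iic (0:ℝ), h x * q x := by
    congr 1; funext x; simp only [hh, hgm, hq]; ring
  rw [eLHS, eRHS, eIic, ← hsplit_a]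
  -- |∫ h F| ≤ ε^n ∫ h a = (∫ h a) ε^n
  calc |∫ x, h x * F x| ≤ ∫ x, |h x * F x| := by
        simpa only [Real.norm_eq_abs] using
          norm_integral_le_integral_norm (μ := volume) (fun x => h x * F x)
    _ ≤ ∫ x, ε ^ n * (h x * a x) := by
        refine integral_mono I_hF.abs (I_ha.const_mul _) fun x => ?_
        rw [abs_mul, abs_of_nonneg (hh_nonneg x)]
        calc h x * |F x| ≤ h x * (ε ^ n * a x) :=
              mul_le_mul_of_nonneg_left (hF_bound x) (hh_nonneg x)
          _ = ε ^ n * (h x * a x) := by ring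
    _ = (∫ x, h x * a x) * ε ^ n := by rw [integral_const_mul]; ring
end

section
/- For all integers m and n with m odd and n even nonnegative, if E[|X|^m] < ∞ and x ↦ x^m·h_X(x) is Lebesgue integrable on (−∞, 0], then |E[X^m · err(X)^n]| ≤ ( E[X^m] − 2·∫_{−∞}^{0} x^m·h_X(x) dx ) · δ^n. -/
open MeasureTheory
open scoped NNReal ENNReal

theorem exp_x_error_symm_add
    {Ω : Type*} [MeasurableSpace Ω] (P : Measure Ω) [IsProbabilityMeasure P]
    (X : Ω → ℝ) (hX : Measurable X)
    (rd : ℝ → ℝ) (hrd : Measurable rd)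
    (δ : ℝ) (hδ : 0 ≤ δ) (hbound : ∀ x : ℝ, |rd x - x| ≤ δ)
    (hodd : ∀ x : ℝ, rd x = -rd (-x))
    (fX : ℝ → ℝ) (hfX_nonneg : ∀ x, 0 ≤ fX x) (hfX_meas : Measurable fX)
    (hlaw : Measure.map X P = volume.withDensity (fun x => ENNReal.ofReal (fX x)))
    (m n : ℕ) (hm : Odd m) (hn : Even n)
    (hmom : Integrable (fun ω => |X ω| ^ m) P)
    (hint : IntegrableOn
      (fun x => x ^ m * (fX x - min (fX x) (fX (-x)))) (Set.Iic 0)) :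
    |∫ ω, (X ω) ^ m * (rd (X ω) - X ω) ^ n ∂P|
      ≤ ((∫ ω, (X ω) ^ m ∂P)
          - 2 * ∫ x in Set.Iic (0 : ℝ), x ^ m * (fX x - min (fX x) (fX (-x))))
        * δ ^ n := by
  classical
  set g : ℝ → ℝ := fun x => min (fX x) (fX (-x)) with hg_def
  set h : ℝ → ℝ := fun x => fX x - g x with hh_def
  have hg_meas : Measurable g := hfX_meas.min (hfX_meas.comp measurable_neg)
  have hh_meas : Measurable h := hfX_meas.sub hg_meas
  have hg_nonneg : ∀ x, 0 ≤ g x := fun x => le_min (hfX_nonneg x) (hfX_nonneg (-x))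
  have hg_le : ∀ x, g x ≤ fX x := fun x => min_le_left _ _
  have hh_nonneg : ∀ x, 0 ≤ h x := fun x => sub_nonneg.2 (hg_le x)
  have hh_le : ∀ x, h x ≤ fX x := fun x =>
    sub_le_self _ (hg_nonneg x)
  have hg_even : ∀ x, g (-x) = g x := fun x => by
    simp only [hg_def, neg_neg]; exact min_comm _ _
  set e : ℝ → ℝ := fun x => rd x - x with he_def
  have he_meas : Measurable e := hrd.sub measurable_id
  have he_odd : ∀ x, e (-x) = - e x := fun x => by
    simp only [he_def]; rw [hodd x]; ring
  have hen_even : ∀ x, e (-x) ^ n = e x ^ n := fun x => by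
    rw [he_odd]; exact hn.neg_pow _
  have hen_nonneg : ∀ x, 0 ≤ e x ^ n := fun x => hn.pow_nonneg _
  have hen_le : ∀ x, e x ^ n ≤ δ ^ n := fun x => by
    calc e x ^ n = |e x| ^ n := (hn.pow_abs _).symm
    _ ≤ δ ^ n := pow_le_pow_left₀ (abs_nonneg _) (hbound x) n
  -- transfer of integrals from P to volume with density fX
  have hofReal : (fun x => ENNReal.ofReal (fX x))
      = fun x => ((Real.toNNReal (fX x) : ℝ≥0) : ℝ≥0∞) := by
    funext x; simp [ENNReal.ofReal]
  have htoNN : Measurable fun x => Real.toNNReal (fX x) := hfX_meas.real_toNNReal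
  have htrans : ∀ φ : ℝ → ℝ, Measurable φ →
      ∫ ω, φ (X ω) ∂P = ∫ x, fX x * φ x := by
    intro φ hφ
    rw [← integral_map hX.aemeasurable hφ.aestronglyMeasurable, hlaw, hofReal,
      integral_withDensity_eq_integral_smul htoNN]
    refine integral_congr_ae (Filter.Eventually.of_forall fun x => ?_)
    simp [NNReal.smul_def, Real.coe_toNNReal _ (hfX_nonneg x)]
  -- base integrability fact
  have hI : Integrable (fun x => fX x * |x| ^ m) := by
    have h1 : Integrable (fun x : ℝ => |x| ^ m) (Measure.map X P) := by
      rw [integrable_map_measure ((measurable_abs.pow_const m).aestronglyMeasurable)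
        hX.aemeasurable]
      exact hmom
    rw [hlaw, hofReal, integrable_withDensity_iff_integrable_smul htoNN] at h1
    refine h1.congr (Filter.Eventually.of_forall fun x => ?_)
    simp [NNReal.smul_def, Real.coe_toNNReal _ (hfX_nonneg x)]
  have hInn : 0 ≤ δ ^ n + 1 := by positivity
  have key : ∀ ψ : ℝ → ℝ, Measurable ψ →
      (∀ x, |ψ x| ≤ (δ ^ n + 1) * (fX x * |x| ^ m)) → Integrable ψ := by
    intro ψ hψ hb
    exact (hI.const_mul (δ ^ n + 1)).mono' hψ.aestronglyMeasurable
      (Filter.Eventually.of_forall fun x => by simpa using hb x)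
  -- odd functions integrate to zero
  have hodd_zero : ∀ F : ℝ → ℝ, (∀ x, F (-x) = - F x) → ∫ x, F x = 0 := by
    intro F hF
    have h1 : ∫ x, F (-x) = ∫ x, F x := integral_neg_eq_self F volume
    have h2 : ∫ x, F (-x) = - ∫ x, F x := by
      simp_rw [fun x => hF x]
      exact integral_neg F
    linarith [h1, h2]
  set φ : ℝ → ℝ := fun x => x ^ m * e x ^ n with hφ_def
  have hφ_meas : Measurable φ := (measurable_id.pow_const m).mul (he_meas.pow_const n)
  -- pointwise bounds
  have habs_bound : ∀ ψ : ℝ → ℝ, (∀ x, 0 ≤ ψ x) → (∀ x, ψ x ≤ fX x) →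
      ∀ x, |ψ x * φ x| ≤ (δ ^ n + 1) * (fX x * |x| ^ m) := by
    intro ψ h0 h1 x
    have : |ψ x * φ x| = ψ x * (|x| ^ m * e x ^ n) := by
      rw [abs_mul, abs_of_nonneg (h0 x), hφ_def, abs_mul, abs_pow,
        abs_of_nonneg (hen_nonneg x)]
    rw [this]
    have hb1 : ψ x * (|x| ^ m * e x ^ n) ≤ fX x * (|x| ^ m * δ ^ n) := by
      apply mul_le_mul (h1 x) _ (mul_nonneg (by positivity) (hen_nonneg x)) (hfX_nonneg x)
      exact mul_le_mul_of_nonneg_left (hen_le x) (by positivity)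
    calc ψ x * (|x| ^ m * e x ^ n) ≤ fX x * (|x| ^ m * δ ^ n) := hb1
      _ = δ ^ n * (fX x * |x| ^ m) := by ring
      _ ≤ (δ ^ n + 1) * (fX x * |x| ^ m) := by nlinarith [mul_nonneg (hfX_nonneg x) (pow_nonneg (abs_nonneg x) m)]
  have hxm_bound : ∀ ψ : ℝ → ℝ, (∀ x, 0 ≤ ψ x) → (∀ x, ψ x ≤ fX x) →
      ∀ x, |ψ x * x ^ m| ≤ (δ ^ n + 1) * (fX x * |x| ^ m) := by
    intro ψ h0 h1 x
    have : |ψ x * x ^ m| = ψ x * |x| ^ m := by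
      rw [abs_mul, abs_of_nonneg (h0 x), abs_pow]
    rw [this]
    have : ψ x * |x| ^ m ≤ fX x * |x| ^ m :=
      mul_le_mul_of_nonneg_right (h1 x) (by positivity)
    nlinarith [mul_nonneg (hfX_nonneg x) (pow_nonneg (abs_nonneg x) m),
      pow_nonneg hδ n]
  -- integrabilities
  have hint_gφ : Integrable (fun x => g x * φ x) :=
    key _ (hg_meas.mul hφ_meas) (habs_bound g hg_nonneg hg_le)
  have hint_hφ : Integrable (fun x => h x * φ x) :=
    key _ (hh_meas.mul hφ_meas) (habs_bound h hh_nonneg hh_le)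
  have hint_gx : Integrable (fun x => g x * x ^ m) :=
    key _ (hg_meas.mul (measurable_id.pow_const m)) (hxm_bound g hg_nonneg hg_le)
  have hint_hx : Integrable (fun x => h x * x ^ m) :=
    key _ (hh_meas.mul (measurable_id.pow_const m)) (hxm_bound h hh_nonneg hh_le)
  have hint_habs : Integrable (fun x => h x * |x| ^ m) := by
    refine key _ (hh_meas.mul (measurable_abs.pow_const m)) fun x => ?_
    have : |h x * |x| ^ m| = h x * |x| ^ m := by
      rw [abs_of_nonneg (mul_nonneg (hh_nonneg x) (by positivity))]
    rw [this]
    have : h x * |x| ^ m ≤ fX x * |x| ^ m :=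
      mul_le_mul_of_nonneg_right (hh_le x) (by positivity)
    nlinarith [mul_nonneg (hfX_nonneg x) (pow_nonneg (abs_nonneg x) m),
      pow_nonneg hδ n]
  -- step 1 : LHS rewriting
  have hLHS : ∫ ω, (X ω) ^ m * (rd (X ω) - X ω) ^ n ∂P = ∫ x, fX x * φ x := by
    have := htrans φ hφ_meas
    simpa [hφ_def, he_def] using this
  have hsplit : ∫ x, fX x * φ x = (∫ x, g x * φ x) + ∫ x, h x * φ x := by
    have h1 : ∫ x, fX x * φ x = ∫ x, (g x * φ x + h x * φ x) :=
      integral_congr_ae (Filter.Eventually.of_forall fun x => by simp [hh_def]; ring)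
    rw [h1]; exact integral_add hint_gφ hint_hφ
  have hzero_gφ : ∫ x, g x * φ x = 0 := by
    refine hodd_zero _ fun x => ?_
    simp only [hφ_def, hg_even x, hen_even x, hm.neg_pow]
    ring
  -- step 2 : RHS rewriting
  have hEXm : ∫ ω, (X ω) ^ m ∂P = ∫ x, fX x * x ^ m :=
    htrans (fun x => x ^ m) (measurable_id.pow_const m)
  have hsplit2 : ∫ x, fX x * x ^ m = (∫ x, g x * x ^ m) + ∫ x, h x * x ^ m := by
    have h1 : ∫ x, fX x * x ^ m = ∫ x, (g x * x ^ m + h x * x ^ m) :=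
      integral_congr_ae (Filter.Eventually.of_forall fun x => by simp [hh_def]; ring)
    rw [h1]; exact integral_add hint_gx hint_hx
  have hzero_gx : ∫ x, g x * x ^ m = 0 := by
    refine hodd_zero _ fun x => ?_
    rw [hg_even x, hm.neg_pow]
    ring
  have hIic : ∫ x in Set.Iic (0:ℝ), x ^ m * (fX x - min (fX x) (fX (-x)))
      = ∫ x in Set.Iic (0:ℝ), h x * x ^ m := by
    refine integral_congr_ae (Filter.Eventually.of_forall fun x => ?_)
    simp [hh_def, hg_def]; ring
  have hdecomp : ∫ x, h x * x ^ m
      = (∫ x in Set.Iic (0:ℝ), h x * x ^ m) + ∫ x in Set.Ioi (0:ℝ), h x * x ^ m :=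
    (intervalIntegral.integral_Iic_add_Ioi hint_hx.integrableOn hint_hx.integrableOn).symm
  have hdecomp_abs : ∫ x, h x * |x| ^ m
      = (∫ x in Set.Iic (0:ℝ), h x * |x| ^ m) + ∫ x in Set.Ioi (0:ℝ), h x * |x| ^ m :=
    (intervalIntegral.integral_Iic_add_Ioi hint_habs.integrableOn hint_habs.integrableOn).symm
  have habs_Iic : ∫ x in Set.Iic (0:ℝ), h x * |x| ^ m
      = - ∫ x in Set.Iic (0:ℝ), h x * x ^ m := by
    rw [← integral_neg]
    refine setIntegral_congr_fun measurableSet_Iic fun x hx => ?_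
    have hx0 : x ≤ 0 := hx
    have : |x| = -x := abs_of_nonpos hx0
    rw [this, hm.neg_pow]
    ring
  have habs_Ioi : ∫ x in Set.Ioi (0:ℝ), h x * |x| ^ m
      = ∫ x in Set.Ioi (0:ℝ), h x * x ^ m := by
    refine setIntegral_congr_fun measurableSet_Ioi fun x hx => ?_
    have : |x| = x := abs_of_pos hx
    rw [this]
  -- final bound
  have hfinal : |∫ x, h x * φ x| ≤ (∫ x, h x * |x| ^ m) * δ ^ n := by
    have h1 : |∫ x, h x * φ x| ≤ ∫ x, |h x * φ x| := by
      simpa only [Real.norm_eq_abs] using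
        norm_integral_le_integral_norm (fun x => h x * φ x) (μ := volume)
    have h2 : ∫ x, |h x * φ x| ≤ ∫ x, h x * |x| ^ m * δ ^ n := by
      refine integral_mono hint_hφ.abs (hint_habs.mul_const _) fun x => ?_
      have heq : |h x * φ x| = h x * (|x| ^ m * e x ^ n) := by
        rw [abs_mul, abs_of_nonneg (hh_nonneg x), hφ_def, abs_mul, abs_pow,
          abs_of_nonneg (hen_nonneg x)]
      rw [heq]
      have : h x * (|x| ^ m * e x ^ n) ≤ h x * (|x| ^ m * δ ^ n) := by
        apply mul_le_mul_of_nonneg_left _ (hh_nonneg x)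
        exact mul_le_mul_of_nonneg_left (hen_le x) (by positivity)
      calc h x * (|x| ^ m * e x ^ n) ≤ h x * (|x| ^ m * δ ^ n) := this
        _ = h x * |x| ^ m * δ ^ n := by ring
    have h3 : ∫ x, h x * |x| ^ m * δ ^ n = (∫ x, h x * |x| ^ m) * δ ^ n :=
      integral_mul_const _ _
    linarith [h1, h2, h3.le, h3.ge]
  -- put everything together
  rw [hLHS, hsplit, hzero_gφ, zero_add, hEXm, hsplit2, hzero_gx, zero_add, hIic]
  have hR : (∫ x, h x * x ^ m) - 2 * ∫ x in Set.Iic (0:ℝ), h x * x ^ m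
      = ∫ x, h x * |x| ^ m := by
    rw [hdecomp_abs, habs_Iic, habs_Ioi, hdecomp]
    ring
  rw [hR]
  exact hfinal
end

section
/- There exists a constant C ≥ 0 (depending only on X and k) such that for every δ ∈ [0, 1] and every Borel measurable function rd : ℝ → ℝ satisfying |rd(x) − x| ≤ δ for all x ∈ ℝ, one has |M_k[rd(X)] − M_k[X]| ≤ C·δ. -/
open MeasureTheory Finset

lemma aux_pow_sub_pow (a b : ℝ) (k : ℕ) :
    |a ^ k - b ^ k| ≤ k * max |a| |b| ^ (k - 1) * |a - b| := by
  set M := max |a| |b| with hM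
  have h0 : (0:ℝ) ≤ M := le_trans (abs_nonneg a) (le_max_left _ _)
  rw [← geom_sum₂_mul a b k, abs_mul]
  gcongr
  calc |∑ i ∈ range k, a ^ i * b ^ (k - 1 - i)|
      ≤ ∑ i ∈ range k, |a ^ i * b ^ (k - 1 - i)| := abs_sum_le_sum_abs _ _
    _ ≤ ∑ _i ∈ range k, M ^ (k - 1) := by
        apply Finset.sum_le_sum
        intro i hi
        rw [abs_mul, abs_pow, abs_pow]
        calc |a| ^ i * |b| ^ (k - 1 - i) ≤ M ^ i * M ^ (k - 1 - i) := by
              gcongr <;> [exact le_max_left _ _; exact le_max_right _ _]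
          _ = M ^ (i + (k - 1 - i)) := (pow_add M i _).symm
          _ = M ^ (k - 1) := by
              congr 1
              have := Finset.mem_range.mp hi
              omega
    _ = k * M ^ (k - 1) := by rw [Finset.sum_const, card_range, nsmul_eq_mul]

lemma aux_abs_le (x : ℝ) (k : ℕ) (hk : 1 ≤ k) : |x| ≤ |x| ^ k + 1 := by
  rcases le_total |x| 1 with h | h
  · nlinarith [pow_nonneg (abs_nonneg x) k]
  · have : |x| ≤ |x| ^ k := le_self_pow₀ h (by omega)
    linarith

lemma aux_add_pow (s t : ℝ) (hs : 0 ≤ s) (ht : 0 ≤ t) (k : ℕ) :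
    (s + t) ^ k ≤ 2 ^ k * (s ^ k + t ^ k) := by
  have h1 : s + t ≤ 2 * max s t := by
    rcases max_cases s t with ⟨h, h'⟩ | ⟨h, h'⟩ <;> rw [h] <;> linarith
  calc (s + t) ^ k ≤ (2 * max s t) ^ k := pow_le_pow_left₀ (by positivity) h1 k
    _ = 2 ^ k * max s t ^ k := mul_pow _ _ _
    _ ≤ 2 ^ k * (s ^ k + t ^ k) := by
        gcongr
        rcases max_cases s t with ⟨h, _⟩ | ⟨h, _⟩ <;> rw [h] <;>
          nlinarith [pow_nonneg hs k, pow_nonneg ht k]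

theorem centered_moments_first_order_add
    {Ω : Type*} [MeasurableSpace Ω] (P : Measure Ω) [IsProbabilityMeasure P]
    (k : ℕ) (hk : 1 ≤ k)
    (X : Ω → ℝ) (hX : Measurable X)
    (hmom : Integrable (fun ω => |X ω| ^ k) P) :
    ∃ C : ℝ, 0 ≤ C ∧
      ∀ δ : ℝ, δ ∈ Set.Icc (0 : ℝ) 1 →
        ∀ rd : ℝ → ℝ, Measurable rd → (∀ x : ℝ, |rd x - x| ≤ δ) →
          |(∫ ω, (rd (X ω) - ∫ ω', rd (X ω') ∂P) ^ k ∂P)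
            - ∫ ω, (X ω - ∫ ω', X ω' ∂P) ^ k ∂P| ≤ C * δ := by
  have hXint : Integrable X P := by
    refine (hmom.add (integrable_const 1)).mono' hX.aestronglyMeasurable ?_
    filter_upwards with ω
    simpa [Real.norm_eq_abs] using aux_abs_le (X ω) k hk
  set m : ℝ := ∫ ω', X ω' ∂P with hm
  set c : ℝ := |m| + 2 with hc
  have hc0 : (0:ℝ) ≤ c := by positivity
  set g : Ω → ℝ := fun ω => (|X ω - m| + 2) ^ (k - 1) with hgdef
  have hgmeas : Measurable g :=
    (((hX.sub measurable_const).abs.add measurable_const).pow_const _)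
  have hdom : Integrable (fun ω => 2 ^ k * (|X ω| ^ k + c ^ k)) P :=
    (hmom.add (integrable_const (c ^ k))).const_mul _
  have hXc_le : ∀ ω, |X ω - m| + 2 ≤ |X ω| + c := by
    intro ω
    have := abs_sub (X ω) m
    simp only [hc]
    linarith [abs_sub_abs_le_abs_sub (X ω) m, abs_sub (X ω) m]
  have hbound : ∀ ω, (|X ω - m| + 2) ^ k ≤ 2 ^ k * (|X ω| ^ k + c ^ k) := by
    intro ω
    calc (|X ω - m| + 2) ^ k ≤ (|X ω| + c) ^ k :=
          pow_le_pow_left₀ (by positivity) (hXc_le ω) k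
      _ ≤ 2 ^ k * (|X ω| ^ k + c ^ k) := aux_add_pow _ _ (abs_nonneg _) hc0 k
  have hgint : Integrable g P := by
    refine hdom.mono' hgmeas.aestronglyMeasurable ?_
    filter_upwards with ω
    rw [Real.norm_eq_abs, abs_of_nonneg (by positivity)]
    calc (|X ω - m| + 2) ^ (k - 1) ≤ (|X ω - m| + 2) ^ k :=
          pow_le_pow_right₀ (by linarith [abs_nonneg (X ω - m)]) (Nat.sub_le k 1)
      _ ≤ 2 ^ k * (|X ω| ^ k + c ^ k) := hbound ω
  refine ⟨2 * k * ∫ ω, g ω ∂P, mul_nonneg (by positivity)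
    (integral_nonneg fun ω => by positivity), ?_⟩
  rintro δ ⟨hδ0, hδ1⟩ rd hrd hbd
  set Y : Ω → ℝ := fun ω => rd (X ω) with hYdef
  have hYmeas : Measurable Y := hrd.comp hX
  have hYint : Integrable Y P := by
    refine (hXint.norm.add (integrable_const δ)).mono' hYmeas.aestronglyMeasurable ?_
    filter_upwards with ω
    simp only [Real.norm_eq_abs]
    have h1 := hbd (X ω)
    calc |Y ω| = |X ω + (Y ω - X ω)| := by ring_nf
      _ ≤ |X ω| + |Y ω - X ω| := abs_add_le _ _
      _ ≤ |X ω| + δ := by linarith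
  set mY : ℝ := ∫ ω', Y ω' ∂P with hmY
  have hmdiff : |mY - m| ≤ δ := by
    rw [hmY, hm, ← integral_sub hYint hXint]
    calc |∫ ω, (Y ω - X ω) ∂P| ≤ ∫ ω, |Y ω - X ω| ∂P := by
          simpa [Real.norm_eq_abs] using
            norm_integral_le_integral_norm (μ := P) (fun ω => Y ω - X ω)
      _ ≤ ∫ _ω, δ ∂P :=
          integral_mono (hYint.sub hXint).abs (integrable_const δ) fun ω => hbd (X ω)
      _ = δ := by simp
  -- pointwise key estimate
  have key : ∀ ω, |(Y ω - mY) ^ k - (X ω - m) ^ k| ≤ 2 * k * g ω * δ := by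
    intro ω
    have hab : |(Y ω - mY) - (X ω - m)| ≤ 2 * δ := by
      have h1 := hbd (X ω)
      calc |(Y ω - mY) - (X ω - m)| = |(Y ω - X ω) + (m - mY)| := by ring_nf
        _ ≤ |Y ω - X ω| + |m - mY| := abs_add_le _ _
        _ ≤ δ + δ := add_le_add h1 (by rw [abs_sub_comm]; exact hmdiff)
        _ = 2 * δ := by ring
    have hMle : max |Y ω - mY| |X ω - m| ≤ |X ω - m| + 2 := by
      refine max_le ?_ (by linarith [abs_nonneg (X ω - m)])
      calc |Y ω - mY| = |(X ω - m) + ((Y ω - mY) - (X ω - m))| := by ring_nf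
        _ ≤ |X ω - m| + |(Y ω - mY) - (X ω - m)| := abs_add_le _ _
        _ ≤ |X ω - m| + 2 := by linarith
    calc |(Y ω - mY) ^ k - (X ω - m) ^ k|
        ≤ k * max |Y ω - mY| |X ω - m| ^ (k - 1) * |(Y ω - mY) - (X ω - m)| :=
          aux_pow_sub_pow _ _ k
      _ ≤ k * (|X ω - m| + 2) ^ (k - 1) * (2 * δ) := by
          gcongr
      _ = 2 * k * g ω * δ := by rw [hgdef]; ring
  -- integrability of centered powers
  have hXck : Integrable (fun ω => (X ω - m) ^ k) P := by
    refine hdom.mono' ((hX.sub measurable_const).pow_const k).aestronglyMeasurable ?_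
    filter_upwards with ω
    rw [Real.norm_eq_abs, abs_pow]
    calc |X ω - m| ^ k ≤ (|X ω - m| + 2) ^ k :=
          pow_le_pow_left₀ (abs_nonneg _) (by linarith) k
      _ ≤ 2 ^ k * (|X ω| ^ k + c ^ k) := hbound ω
  have hYck : Integrable (fun ω => (Y ω - mY) ^ k) P := by
    refine hdom.mono' ((hYmeas.sub measurable_const).pow_const k).aestronglyMeasurable ?_
    filter_upwards with ω
    rw [Real.norm_eq_abs, abs_pow]
    have h2 : |Y ω - mY| ≤ |X ω - m| + 2 := by
      have h1 := hbd (X ω)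
      calc |Y ω - mY| = |(X ω - m) + ((Y ω - X ω) + (m - mY))| := by ring_nf
        _ ≤ |X ω - m| + |(Y ω - X ω) + (m - mY)| := abs_add_le _ _
        _ ≤ |X ω - m| + (|Y ω - X ω| + |m - mY|) := by
            gcongr; exact abs_add_le _ _
        _ ≤ |X ω - m| + 2 := by
            have h3 : |m - mY| ≤ δ := by rw [abs_sub_comm]; exact hmdiff
            linarith
    calc |Y ω - mY| ^ k ≤ (|X ω - m| + 2) ^ k :=
          pow_le_pow_left₀ (abs_nonneg _) h2 k
      _ ≤ 2 ^ k * (|X ω| ^ k + c ^ k) := hbound ω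
  calc |(∫ ω, (Y ω - mY) ^ k ∂P) - ∫ ω, (X ω - m) ^ k ∂P|
      = |∫ ω, ((Y ω - mY) ^ k - (X ω - m) ^ k) ∂P| := by
        rw [integral_sub hYck hXck]
    _ ≤ ∫ ω, |(Y ω - mY) ^ k - (X ω - m) ^ k| ∂P := by
        simpa [Real.norm_eq_abs] using norm_integral_le_integral_norm (μ := P)
          (fun ω => (Y ω - mY) ^ k - (X ω - m) ^ k)
    _ ≤ ∫ ω, 2 * k * g ω * δ ∂P :=
        integral_mono (hYck.sub hXck).abs
          (((hgint.const_mul (2 * k)).mul_const δ)) key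
    _ = 2 * k * (∫ ω, g ω ∂P) * δ := by
        rw [integral_mul_const, integral_const_mul]
end

section
/- Let f : ℝ → ℝ be nonnegative and lower semicontinuous, and let g, h : ℝ → ℝ be Lebesgue integrable functions such that f·g and f·h are Lebesgue integrable and ∫_a^b g(x) dx ≤ ∫_a^b h(x) dx for all real numbers a ≤ b. Then ∫_ℝ f(x)·g(x) dx ≤ ∫_ℝ f(x)·h(x) dx. -/
open MeasureTheory Filter Topology

/-- If an integrable function has nonnegative integral over every interval, it is
nonnegative a.e., by the Lebesgue differentiation theorem. -/
lemma ae_nonneg_of_intervalIntegral_nonneg (φ : ℝ → ℝ) (hφ : Integrable φ)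
    (hint : ∀ a b : ℝ, a ≤ b → 0 ≤ ∫ x in a..b, φ x) :
    ∀ᵐ x, 0 ≤ φ x := by
  filter_upwards [IsUnifLocDoublingMeasure.ae_tendsto_average
    (μ := (volume : Measure ℝ)) hφ.locallyIntegrable 1] with x hx
  have hlim : Tendsto (fun r : ℝ => ⨍ y in Metric.closedBall x r, φ y) (𝓝[>] 0)
      (𝓝 (φ x)) := by
    apply hx (fun _ => x) id tendsto_id
    filter_upwards [self_mem_nhdsWithin] with r (hr : 0 < r)
    exact Metric.mem_closedBall_self (by simp; linarith)
  refine ge_of_tendsto hlim ?_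
  filter_upwards [self_mem_nhdsWithin] with r (hr : 0 < r)
  have hIcc : Metric.closedBall x r = Set.Icc (x - r) (x + r) := Real.closedBall_eq_Icc
  have hnn : 0 ≤ ∫ y in Metric.closedBall x r, φ y := by
    rw [hIcc, MeasureTheory.integral_Icc_eq_integral_Ioc,
      ← intervalIntegral.integral_of_le (by linarith)]
    exact hint _ _ (by linarith)
  rw [setAverage_eq]
  exact smul_nonneg (by positivity) hnn

theorem integral_mul_mono_of_intervalIntegral_mono
    (f g h : ℝ → ℝ)
    (hf_nonneg : ∀ x, 0 ≤ f x) (hf_lsc : LowerSemicontinuous f)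
    (hg : Integrable g) (hh : Integrable h)
    (hfg : Integrable (fun x => f x * g x)) (hfh : Integrable (fun x => f x * h x))
    (hcomp : ∀ a b : ℝ, a ≤ b → (∫ x in a..b, g x) ≤ ∫ x in a..b, h x) :
    (∫ x, f x * g x) ≤ ∫ x, f x * h x := by
  have key : ∀ᵐ x, 0 ≤ (h - g) x := by
    apply ae_nonneg_of_intervalIntegral_nonneg _ (hh.sub hg)
    intro a b hab
    have : (∫ x in a..b, (h - g) x) = (∫ x in a..b, h x) - ∫ x in a..b, g x :=
      intervalIntegral.integral_sub hh.intervalIntegrable hg.intervalIntegrable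
    rw [this]
    linarith [hcomp a b hab]
  apply integral_mono_ae hfg hfh
  filter_upwards [key] with x hx
  have : g x ≤ h x := by simpa [sub_nonneg] using hx
  exact mul_le_mul_of_nonneg_left this (hf_nonneg x)
end

section
/- Let k ≥ 1 be an integer and let p ≤ q be integers, and set a := α + 2δp and b := α + 2δq (so a, b ∈ F). Then ∫_a^b |err(x)|^k dx = ((b − a)/(k+1)) · δ^k, and if moreover k is odd then ∫_a^b err(x)^k dx = 0. -/
/-!
Only ties are ambiguous for a round-to-nearest map: `|err x|` is the distance from `x` to the
mesh, and `err x` agrees with the canonical round-half-up error `meshErr` except possibly at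
the countably many points `α + δn`. The canonical error is `2δ`-periodic and equals `α - x` on the
cell `[α - δ, α + δ)`, so over `q - p` whole periods the integral of `φ ∘ err` is
`(q - p) ∫_{-δ}^{δ} φ` for any continuous `φ`: the error is uniformly distributed on `[-δ, δ]`.
-/

open MeasureTheory Set Function intervalIntegral

theorem integral_neg_self_abs_pow {c : ℝ} (hc : 0 ≤ c) (n : ℕ) :
    ∫ x in -c..c, |x| ^ n = 2 * c ^ (n + 1) / (n + 1) := by
  have hint (s t : ℝ) : IntervalIntegrable (fun x => |x| ^ n) volume s t :=
    (continuous_abs.pow n).intervalIntegrable s t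
  have hright : ∫ x in 0..c, |x| ^ n = c ^ (n + 1) / (n + 1) := by
    rw [integral_congr (g := fun x => x ^ n) fun x hx => by
      rw [uIcc_of_le hc] at hx
      simp only [abs_of_nonneg hx.1]]
    simp
  have hleft : ∫ x in -c..0, |x| ^ n = ∫ x in 0..c, |x| ^ n := by
    simpa using (integral_comp_neg (a := 0) (b := c) fun x => |x| ^ n).symm
  rw [← integral_add_adjacent_intervals (hint (-c) 0) (hint 0 c), hleft, hright]
  ring

noncomputable def meshErr (δ α x : ℝ) : ℝ :=
  2 * δ * round ((x - α) / (2 * δ)) + α - x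

section meshErr

variable {δ : ℝ} (α : ℝ)

theorem meshErr_eq_mul_round_sub (hδ : δ ≠ 0) (x : ℝ) :
    meshErr δ α x = 2 * δ * (round ((x - α) / (2 * δ)) - (x - α) / (2 * δ)) := by
  rw [meshErr, mul_sub, mul_div_cancel₀ _ (mul_ne_zero two_ne_zero hδ)]
  ring

theorem abs_meshErr_le (hδ : 0 < δ) (x : ℝ) : |meshErr δ α x| ≤ δ := by
  rw [meshErr_eq_mul_round_sub α hδ.ne', abs_mul, abs_of_pos (by positivity), abs_sub_comm]
  nlinarith [abs_sub_round ((x - α) / (2 * δ))]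

theorem abs_meshErr_le_abs_sub (hδ : 0 < δ) (x : ℝ) (z : ℤ) :
    |meshErr δ α x| ≤ |2 * δ * z + α - x| := by
  have hz : 2 * δ * z + α - x = 2 * δ * (z - (x - α) / (2 * δ)) := by
    rw [mul_sub, mul_div_cancel₀ _ (by positivity)]
    ring
  rw [meshErr_eq_mul_round_sub α hδ.ne', hz, abs_mul (2 * δ), abs_mul (2 * δ),
    abs_sub_comm (round _ : ℝ), abs_sub_comm (z : ℝ)]
  exact mul_le_mul_of_nonneg_left (round_le _ z) (abs_nonneg _)

theorem periodic_meshErr (hδ : δ ≠ 0) : Periodic (meshErr δ α) (2 * δ) := by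
  intro x
  have hu : (x + 2 * δ - α) / (2 * δ) = (x - α) / (2 * δ) + 1 := by
    field_simp
    ring
  rw [meshErr, meshErr, hu, round_add_one]
  push_cast
  ring

theorem meshErr_eq_sub_of_mem_Ico (hδ : 0 < δ) {x : ℝ} (hx : x ∈ Ico (α - δ) (α + δ)) :
    meshErr δ α x = α - x := by
  have h2δ : 0 < 2 * δ := by positivity
  have hround : round ((x - α) / (2 * δ)) = 0 := by
    rw [round_eq_zero_iff, mem_Ico, le_div_iff₀ h2δ, div_lt_iff₀ h2δ]
    constructor <;> linarith [hx.1, hx.2]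
  simp [meshErr, hround]

theorem measurable_meshErr : Measurable (meshErr δ α) := by
  unfold meshErr
  simp only [round_eq]
  fun_prop

theorem intervalIntegrable_comp_meshErr (hδ : 0 < δ) {φ : ℝ → ℝ} (hφ : Continuous φ)
    (s t : ℝ) : IntervalIntegrable (fun x => φ (meshErr δ α x)) volume s t := by
  obtain ⟨C, hC⟩ := isCompact_Icc.exists_bound_of_continuousOn (s := Icc (-δ) δ) hφ.continuousOn
  rw [intervalIntegrable_iff]
  exact Measure.integrableOn_of_bounded measure_Ioc_lt_top.ne
    (hφ.measurable.comp (measurable_meshErr α)).aestronglyMeasurable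
    (ae_of_all _ fun x => hC _ (abs_le.mp (abs_meshErr_le α hδ x)))

theorem integral_comp_meshErr (hδ : 0 < δ) {φ : ℝ → ℝ} (hφ : Continuous φ) (p q : ℤ) :
    ∫ x in α + 2 * δ * p..α + 2 * δ * q, φ (meshErr δ α x) = (q - p) * ∫ y in -δ..δ, φ y := by
  have hper : Periodic (fun x => φ (meshErr δ α x)) (2 * δ) :=
    (periodic_meshErr α hδ.ne').comp φ
  have hq : α + 2 * δ * q = α + 2 * δ * p + (q - p) • (2 * δ) := by
    rw [zsmul_eq_mul]
    push_cast
    ring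
  rw [hq, hper.intervalIntegral_add_zsmul_eq _ _ (intervalIntegrable_comp_meshErr α hδ hφ),
    hper.intervalIntegral_add_eq _ (α - δ), zsmul_eq_mul]
  push_cast
  congr 1
  have hcell : ∀ᵐ x, x ∈ uIoc (α - δ) (α - δ + 2 * δ) → φ (meshErr δ α x) = φ (α - x) := by
    filter_upwards [(countable_singleton (α + δ)).ae_notMem volume] with x hne hx
    rw [uIoc_of_le (by linarith)] at hx
    rw [meshErr_eq_sub_of_mem_Ico α hδ ⟨hx.1.le, lt_of_le_of_ne (by linarith [hx.2]) hne⟩]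
  rw [integral_congr_ae hcell, integral_comp_sub_left]
  ring_nf

theorem abs_sub_eq_abs_meshErr (hδ : 0 < δ) {x y : ℝ} (hy : ∃ z : ℤ, y = 2 * δ * z + α)
    (hnear : ∀ z : ℤ, |y - x| ≤ |2 * δ * z + α - x|) : |y - x| = |meshErr δ α x| := by
  obtain ⟨z, rfl⟩ := hy
  exact le_antisymm (hnear _) (abs_meshErr_le_abs_sub α hδ x z)

theorem sub_eq_meshErr (hδ : 0 < δ) {x y : ℝ} (hy : ∃ z : ℤ, y = 2 * δ * z + α)
    (hnear : ∀ z : ℤ, |y - x| ≤ |2 * δ * z + α - x|) (hx : x ∉ range fun n : ℤ => α + δ * n) :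
    y - x = meshErr δ α x := by
  rcases abs_eq_abs.mp (abs_sub_eq_abs_meshErr α hδ hy hnear) with h | h
  · exact h
  · -- two distinct nearest mesh points: `x` is their midpoint
    obtain ⟨z, rfl⟩ := hy
    refine absurd ⟨z + round ((x - α) / (2 * δ)), ?_⟩ hx
    rw [meshErr] at h
    push_cast
    linarith

end meshErr

theorem error_int_uniform_mesh_general
    (δ α : ℝ) (hδ : 0 < δ)
    (rd : ℝ → ℝ)
    (hrd_mem : ∀ x : ℝ, ∃ z : ℤ, rd x = 2 * δ * z + α)
    (hrd_near : ∀ x : ℝ, ∀ z : ℤ, |rd x - x| ≤ |(2 * δ * z + α) - x|)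
    (k : ℕ)
    (p q : ℤ) (a b : ℝ)
    (ha : a = α + 2 * δ * p) (hb : b = α + 2 * δ * q) :
    (∫ x in a..b, |rd x - x| ^ k) = ((b - a) / (k + 1)) * δ ^ k ∧
      (Odd k → (∫ x in a..b, (rd x - x) ^ k) = 0) := by
  have habs (x : ℝ) : |rd x - x| = |meshErr δ α x| :=
    abs_sub_eq_abs_meshErr α hδ (hrd_mem x) (hrd_near x)
  have hae : ∀ᵐ x, rd x - x = meshErr δ α x :=
    ((countable_range _).ae_notMem volume).mono fun x hx =>
      sub_eq_meshErr α hδ (hrd_mem x) (hrd_near x) hx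
  subst ha hb
  constructor
  · simp_rw [habs]
    rw [integral_comp_meshErr α hδ (φ := fun y => |y| ^ k) (by fun_prop), integral_neg_self_abs_pow hδ.le]
    field_simp
    ring
  · intro hk
    rw [integral_congr_ae (hae.mono fun x hx _ => by rw [hx]),
      integral_comp_meshErr α hδ (φ := fun y => y ^ k) (by fun_prop), integral_pow, hk.add_one.neg_pow]
    simp

theorem error_int_uniform_mesh
    (δ α : ℝ) (hδ : 0 < δ)
    (rd : ℝ → ℝ) (hrd_meas : Measurable rd)
    (hrd_mem : ∀ x : ℝ, ∃ z : ℤ, rd x = 2 * δ * z + α)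
    (hrd_near : ∀ x : ℝ, ∀ z : ℤ, |rd x - x| ≤ |(2 * δ * z + α) - x|)
    (k : ℕ) (hk : 1 ≤ k)
    (p q : ℤ) (hpq : p ≤ q) (a b : ℝ)
    (ha : a = α + 2 * δ * p) (hb : b = α + 2 * δ * q) :
    (∫ x in a..b, |rd x - x| ^ k) = ((b - a) / (k + 1)) * δ ^ k ∧
      (Odd k → (∫ x in a..b, (rd x - x) ^ k) = 0) :=
  error_int_uniform_mesh_general δ α hδ rd hrd_mem hrd_near k p q a b ha hb
end

section
/- For every integer k ≥ 1 and all real numbers a ≤ b, ∫_a^b |err(x)|^k dx ≤ ((b − a)/(k+1)) · δ^k + (4/(k+1)) · δ^{k+1}. -/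
open MeasureTheory

/-- Greatest element of `F` below `x`. -/
noncomputable def flF (F : Set ℝ) (x : ℝ) : ℝ := sSup (F ∩ Set.Iic x)

/-- Least element of `F` above `x`. -/
noncomputable def ceF (F : Set ℝ) (x : ℝ) : ℝ := sInf (F ∩ Set.Ici x)

/-!
The complement of `F` is the disjoint union of the open gaps `(⌊x⌋_F, ⌈x⌉_F)`, countably many,
each of length `ℓ ≤ 2δ`. On a gap `|err|` is the distance to the nearer endpoint, so its `k`-th
power integrates to `2 (ℓ/2)^(k+1) / (k+1) ≤ δ^k ℓ / (k+1)`, while `err` vanishes on `F`.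
The gaps meeting `[a, b]` lie in `[a - 2δ, b + 2δ]`, so their total length is at most `b - a + 4δ`.
-/

open Set

theorem integral_min_sub_pow_le (k : ℕ) {z z' δ : ℝ} (hzz' : z ≤ z') (hδ : z' - z ≤ 2 * δ) :
    ∫ y in z..z', min (y - z) (z' - y) ^ k ≤ δ ^ k / (k + 1) * (z' - z) := by
  set m := (z + z') / 2 with hm
  have hcont : Continuous fun y => min (y - z) (z' - y) ^ k := by fun_prop
  have hleft : ∫ y in z..m, min (y - z) (z' - y) ^ k = (m - z) ^ (k + 1) / (k + 1) := by
    rw [intervalIntegral.integral_congr (g := fun y => (y - z) ^ k) fun y hy => ?_,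
      intervalIntegral.integral_comp_sub_right (fun y => y ^ k), integral_pow, sub_self,
      zero_pow k.succ_ne_zero, sub_zero]
    rw [uIcc_of_le (by linarith)] at hy
    rw [min_eq_left (by linarith [hy.2])]
  have hright : ∫ y in m..z', min (y - z) (z' - y) ^ k = (z' - m) ^ (k + 1) / (k + 1) := by
    rw [intervalIntegral.integral_congr (g := fun y => (z' - y) ^ k) fun y hy => ?_,
      intervalIntegral.integral_comp_sub_left (fun y => y ^ k), integral_pow, sub_self,
      zero_pow k.succ_ne_zero, sub_zero]
    rw [uIcc_of_le (by linarith)] at hy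
    rw [min_eq_right (by linarith [hy.1])]
  calc ∫ y in z..z', min (y - z) (z' - y) ^ k
      = (m - z) ^ (k + 1) / (k + 1) + (z' - m) ^ (k + 1) / (k + 1) := by
        rw [← intervalIntegral.integral_add_adjacent_intervals (hcont.intervalIntegrable _ _)
          (hcont.intervalIntegrable _ _), hleft, hright]
    _ = ((z' - z) / 2) ^ k / (k + 1) * (z' - z) := by rw [hm]; ring
    _ ≤ δ ^ k / (k + 1) * (z' - z) := by gcongr; linarith

theorem measure_sUnion_le_mul {α : Type*} [MeasurableSpace α] {μ ν : Measure α}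
    {𝒮 : Set (Set α)} {C : ENNReal} (hc : 𝒮.Countable) (hd : 𝒮.Pairwise Disjoint)
    (hm : ∀ s ∈ 𝒮, MeasurableSet s) (h : ∀ s ∈ 𝒮, ν s ≤ C * μ s) :
    ν (⋃₀ 𝒮) ≤ C * μ (⋃₀ 𝒮) := by
  rw [measure_sUnion hc hd hm, measure_sUnion hc hd hm, ← ENNReal.tsum_mul_left]
  exact ENNReal.tsum_le_tsum fun s => h s s.2

namespace NearestRounding

variable {F : Set ℝ} {x y : ℝ}

theorem le_flF (hy : y ∈ F) (hyx : y ≤ x) : y ≤ flF F x :=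
  le_csSup ⟨x, fun _ hw => hw.2⟩ ⟨hy, hyx⟩

theorem ceF_le (hy : y ∈ F) (hxy : x ≤ y) : ceF F x ≤ y :=
  csInf_le ⟨x, fun _ hw => hw.2⟩ ⟨hy, hxy⟩

theorem flF_mem_Iic (hF : IsClosed F) (hF_below : ∀ x : ℝ, ∃ z ∈ F, z ≤ x) (x : ℝ) :
    flF F x ∈ F ∩ Iic x :=
  (hF.inter isClosed_Iic).csSup_mem (hF_below x) ⟨x, fun _ hw => hw.2⟩

theorem ceF_mem_Ici (hF : IsClosed F) (hF_above : ∀ x : ℝ, ∃ z ∈ F, x ≤ z) (x : ℝ) :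
    ceF F x ∈ F ∩ Ici x :=
  (hF.inter isClosed_Ici).csInf_mem (hF_above x) ⟨x, fun _ hw => hw.2⟩

theorem flF_eq_self (hx : x ∈ F) : flF F x = x :=
  IsGreatest.csSup_eq ⟨⟨hx, self_mem_Iic⟩, fun _ hy => hy.2⟩

theorem ceF_eq_self (hx : x ∈ F) : ceF F x = x :=
  IsLeast.csInf_eq ⟨⟨hx, self_mem_Ici⟩, fun _ hy => hy.2⟩

variable (F) in
def gap (x : ℝ) : Set ℝ := Ioo (flF F x) (ceF F x)

theorem disjoint_gap (x : ℝ) : Disjoint (gap F x) F := by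
  refine Set.disjoint_left.2 fun y ⟨hlo, hhi⟩ hyF => ?_
  rcases le_total y x with hyx | hxy
  · exact (le_flF hyF hyx).not_gt hlo
  · exact (ceF_le hyF hxy).not_gt hhi

theorem mem_gap_self (hF : IsClosed F) (hF_below : ∀ x : ℝ, ∃ z ∈ F, z ≤ x)
    (hF_above : ∀ x : ℝ, ∃ z ∈ F, x ≤ z) (hx : x ∉ F) : x ∈ gap F x := by
  obtain ⟨hflF, hfl_le⟩ := flF_mem_Iic hF hF_below x
  obtain ⟨hceF, hle_ce⟩ := ceF_mem_Ici hF hF_above x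
  exact ⟨(show flF F x ≤ x from hfl_le).lt_of_ne fun h => hx (h ▸ hflF),
    (show x ≤ ceF F x from hle_ce).lt_of_ne fun h => hx (h ▸ hceF)⟩

theorem flF_eq_and_ceF_eq_of_mem_gap (hF : IsClosed F) (hF_below : ∀ x : ℝ, ∃ z ∈ F, z ≤ x)
    (hF_above : ∀ x : ℝ, ∃ z ∈ F, x ≤ z) (hy : y ∈ gap F x) :
    flF F y = flF F x ∧ ceF F y = ceF F x := by
  obtain ⟨hflx, -⟩ := flF_mem_Iic hF hF_below x
  obtain ⟨hcex, -⟩ := ceF_mem_Ici hF hF_above x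
  obtain ⟨hfly, hfly_le⟩ := flF_mem_Iic hF hF_below y
  obtain ⟨hcey, hcey_ge⟩ := ceF_mem_Ici hF hF_above y
  have hout : ∀ z ∈ F, z ∉ gap F x := fun z hz hzg => (disjoint_gap x).ne_of_mem hzg hz rfl
  constructor
  · exact le_antisymm (not_lt.1 fun h => hout _ hfly ⟨h, hfly_le.trans_lt hy.2⟩)
      (le_flF hflx hy.1.le)
  · exact le_antisymm (ceF_le hcex hy.2.le)
      (not_lt.1 fun h => hout _ hcey ⟨hy.1.trans_le hcey_ge, h⟩)

theorem gap_eq_of_mem (hF : IsClosed F) (hF_below : ∀ x : ℝ, ∃ z ∈ F, z ≤ x)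
    (hF_above : ∀ x : ℝ, ∃ z ∈ F, x ≤ z) (hy : y ∈ gap F x) : gap F y = gap F x := by
  obtain ⟨hfl, hce⟩ := flF_eq_and_ceF_eq_of_mem_gap hF hF_below hF_above hy
  rw [gap, hfl, hce, gap]

theorem pairwise_disjoint_range_gap (hF : IsClosed F) (hF_below : ∀ x : ℝ, ∃ z ∈ F, z ≤ x)
    (hF_above : ∀ x : ℝ, ∃ z ∈ F, x ≤ z) : (range (gap F)).Pairwise Disjoint := by
  rintro _ ⟨x, rfl⟩ _ ⟨x', rfl⟩ hne
  refine Set.disjoint_left.2 fun y hy hy' => hne ?_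
  rw [← gap_eq_of_mem hF hF_below hF_above hy, gap_eq_of_mem hF hF_below hF_above hy']

variable (F) in
noncomputable def distF (x : ℝ) : ℝ := min (x - flF F x) (ceF F x - x)

theorem distF_eq_zero (hx : x ∈ F) : distF F x = 0 := by
  simp [distF, flF_eq_self hx, ceF_eq_self hx]

theorem distF_eq_of_mem_gap (hF : IsClosed F) (hF_below : ∀ x : ℝ, ∃ z ∈ F, z ≤ x)
    (hF_above : ∀ x : ℝ, ∃ z ∈ F, x ≤ z) (hy : y ∈ gap F x) :
    distF F y = min (y - flF F x) (ceF F x - y) := by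
  obtain ⟨hfl, hce⟩ := flF_eq_and_ceF_eq_of_mem_gap hF hF_below hF_above hy
  rw [distF, hfl, hce]

theorem withDensity_distF_pow_gap_le (hF : IsClosed F) (hF_below : ∀ x : ℝ, ∃ z ∈ F, z ≤ x)
    (hF_above : ∀ x : ℝ, ∃ z ∈ F, x ≤ z) {δ : ℝ} (hgap : ∀ x : ℝ, ceF F x - flF F x ≤ 2 * δ)
    (k : ℕ) (x : ℝ) :
    volume.withDensity (fun y => ENNReal.ofReal (distF F y ^ k)) (gap F x)
      ≤ ENNReal.ofReal (δ ^ k / (k + 1)) * volume (gap F x) := by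
  have hle : flF F x ≤ ceF F x :=
    (flF_mem_Iic hF hF_below x).2.trans (ceF_mem_Ici hF hF_above x).2
  have hδ : 0 ≤ δ := by linarith [hgap x]
  have hcont : Continuous fun y => min (y - flF F x) (ceF F x - y) ^ k := by fun_prop
  rw [gap, withDensity_apply _ measurableSet_Ioo,
    setLIntegral_congr_fun measurableSet_Ioo fun y hy => by
      rw [distF_eq_of_mem_gap hF hF_below hF_above hy],
    ← ofReal_integral_eq_lintegral_ofReal (hcont.integrableOn_Icc.mono_set Ioo_subset_Icc_self)
      (ae_restrict_of_forall_mem measurableSet_Ioo fun y hy => ?_), Real.volume_Ioo,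
    ← ENNReal.ofReal_mul (by positivity), ← integral_Ioc_eq_integral_Ioo,
    ← intervalIntegral.integral_of_le hle]
  · exact ENNReal.ofReal_le_ofReal (integral_min_sub_pow_le k hle (hgap x))
  · exact pow_nonneg (le_min (sub_nonneg.2 hy.1.le) (sub_nonneg.2 hy.2.le)) k

theorem withDensity_distF_pow_Ioc_le (hF : IsClosed F) (hF_below : ∀ x : ℝ, ∃ z ∈ F, z ≤ x)
    (hF_above : ∀ x : ℝ, ∃ z ∈ F, x ≤ z) {δ : ℝ} (hgap : ∀ x : ℝ, ceF F x - flF F x ≤ 2 * δ)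
    {k : ℕ} (hk : 1 ≤ k) (a b : ℝ) :
    volume.withDensity (fun y => ENNReal.ofReal (distF F y ^ k)) (Ioc a b)
      ≤ ENNReal.ofReal (δ ^ k / (k + 1)) * ENNReal.ofReal (b - a + 4 * δ) := by
  set ν := volume.withDensity fun y => ENNReal.ofReal (distF F y ^ k)
  set 𝒢 := gap F '' (Ioc a b \ F)
  have hdisj : 𝒢.Pairwise Disjoint :=
    (pairwise_disjoint_range_gap hF hF_below hF_above).mono (image_subset_range _ _)
  have hcount : 𝒢.Countable :=
    Set.PairwiseDisjoint.countable_of_isOpen (s := id) hdisj (fun _ ⟨_, _, h⟩ => h ▸ isOpen_Ioo)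
      fun _ ⟨x, hx, h⟩ => h ▸ ⟨x, mem_gap_self hF hF_below hF_above hx.2⟩
  have hcover : Ioc a b ⊆ ⋃₀ 𝒢 ∪ F := fun x hx => by
    by_cases hxF : x ∈ F
    · exact Or.inr hxF
    · exact Or.inl ⟨gap F x, ⟨x, ⟨hx, hxF⟩, rfl⟩, mem_gap_self hF hF_below hF_above hxF⟩
  have hnear : ⋃₀ 𝒢 ⊆ Icc (a - 2 * δ) (b + 2 * δ) := by
    rintro y ⟨_, ⟨x, ⟨hx, -⟩, rfl⟩, hy⟩
    have hfl : flF F x ≤ x := (flF_mem_Iic hF hF_below x).2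
    have hce : x ≤ ceF F x := (ceF_mem_Ici hF hF_above x).2
    have := hgap x
    exact ⟨by linarith [hy.1, hx.1], by linarith [hy.2, hx.2]⟩
  have hνF : ν F = 0 := by
    rw [withDensity_apply _ hF.measurableSet]
    exact setLIntegral_eq_zero hF.measurableSet fun x hx => by
      simp [distF_eq_zero hx, zero_pow (by omega : k ≠ 0)]
  calc ν (Ioc a b) ≤ ν (⋃₀ 𝒢) + ν F := (measure_mono hcover).trans (measure_union_le _ _)
    _ = ν (⋃₀ 𝒢) := by rw [hνF, add_zero]
    _ ≤ ENNReal.ofReal (δ ^ k / (k + 1)) * volume (⋃₀ 𝒢) :=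
        measure_sUnion_le_mul hcount hdisj (fun _ ⟨_, _, h⟩ => h ▸ measurableSet_Ioo)
          fun _ ⟨x, _, h⟩ => h ▸ withDensity_distF_pow_gap_le hF hF_below hF_above hgap k x
    _ ≤ ENNReal.ofReal (δ ^ k / (k + 1)) * ENNReal.ofReal (b - a + 4 * δ) := by
        grw [hnear, Real.volume_Icc, show b + 2 * δ - (a - 2 * δ) = b - a + 4 * δ by ring]

end NearestRounding

open NearestRounding in
theorem error_int_nearest_add_general
    (F : Set ℝ) (hF_closed : IsClosed F)
    (hF_below : ∀ x : ℝ, ∃ z ∈ F, z ≤ x) (hF_above : ∀ x : ℝ, ∃ z ∈ F, x ≤ z)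
    (rd : ℝ → ℝ) (hrd_meas : Measurable rd)
    (hrd_near : ∀ x : ℝ, |rd x - x| = min (x - flF F x) (ceF F x - x))
    (δ : ℝ) (hδ : 0 < δ) (hgap : ∀ x : ℝ, ceF F x - flF F x ≤ 2 * δ)
    (k : ℕ) (hk : 1 ≤ k) (a b : ℝ) (hab : a ≤ b) :
    (∫ x in a..b, |rd x - x| ^ k)
      ≤ ((b - a) / (k + 1)) * δ ^ k + (4 / (k + 1)) * δ ^ (k + 1) := by
  have herr : ∀ x, |rd x - x| = distF F x := hrd_near
  have hmeas : Measurable fun x => |rd x - x| ^ k := by fun_prop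
  rw [intervalIntegral.integral_of_le hab, integral_eq_lintegral_of_nonneg_ae
      (ae_of_all _ fun x => by positivity) hmeas.aestronglyMeasurable]
  simp_rw [herr]
  rw [← withDensity_apply _ measurableSet_Ioc]
  refine ENNReal.toReal_le_of_le_ofReal (by positivity)
    ((withDensity_distF_pow_Ioc_le hF_closed hF_below hF_above hgap hk a b).trans_eq ?_)
  rw [← ENNReal.ofReal_mul (by positivity)]
  congr 1
  field_simp
  ring

theorem error_int_nearest_add
    (F : Set ℝ) (hF_closed : IsClosed F) (hF_ne : F.Nonempty)
    (hF_below : ∀ x : ℝ, ∃ z ∈ F, z ≤ x) (hF_above : ∀ x : ℝ, ∃ z ∈ F, x ≤ z)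
    (rd : ℝ → ℝ) (hrd_meas : Measurable rd)
    (hrd_mem : ∀ x : ℝ, rd x = flF F x ∨ rd x = ceF F x)
    (hrd_near : ∀ x : ℝ, |rd x - x| = min (x - flF F x) (ceF F x - x))
    (δ : ℝ) (hδ : 0 < δ) (hgap : ∀ x : ℝ, ceF F x - flF F x ≤ 2 * δ)
    (k : ℕ) (hk : 1 ≤ k) (a b : ℝ) (hab : a ≤ b) :
    (∫ x in a..b, |rd x - x| ^ k)
      ≤ ((b - a) / (k + 1)) * δ ^ k + (4 / (k + 1)) * δ ^ (k + 1) :=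
  error_int_nearest_add_general F hF_closed hF_below hF_above rd hrd_meas hrd_near δ hδ hgap k hk a
    b hab
end

section
/- For every odd integer k ≥ 1 and all real numbers a ≤ b, |∫_a^b err(x)^k dx| ≤ (1/(k+1)) · δ^{k+1}. -/
open MeasureTheory

/-
Let `d = infDist · F`. Off the countably many midpoints of the gaps of `F`, the function
`-d ^ (k + 1) / (k + 1)` is differentiable with derivative `err ^ k`: at a point of `F` because
`d y ≤ |y - x|` and `k + 1 ≥ 2`, and inside a gap because there `d y = |y - rd x|` near `x`, while
`k + 1` is even and `k` odd. By the fundamental theorem of calculus the integral is a difference of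
two values of `d ^ (k + 1) / (k + 1)`, both of which lie in `[0, δ ^ (k + 1) / (k + 1)]`.
-/

open Filter Topology Metric Set

lemma hasFDerivAt_infDist_pow_of_mem {E : Type*} [NormedAddCommGroup E] [NormedSpace ℝ E]
    {F : Set E} {x : E} (hx : x ∈ F) {m : ℕ} (hm : 1 < m) :
    HasFDerivAt (fun y => infDist y F ^ m) (0 : E →L[ℝ] ℝ) x := by
  refine (Asymptotics.IsBigO.of_bound 1 (Eventually.of_forall fun y => ?_)).hasFDerivAt hm
  rw [one_mul, norm_pow, norm_pow, norm_norm, Real.norm_of_nonneg infDist_nonneg, ← dist_eq_norm]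
  exact pow_le_pow_left₀ infDist_nonneg (infDist_le_dist_of_mem hx) m

section Grid

variable {F : Set ℝ} {x y : ℝ}

lemma le_flF (hy : y ∈ F) (hyx : y ≤ x) : y ≤ flF F x :=
  le_csSup ⟨x, fun _ hw => hw.2⟩ ⟨hy, hyx⟩

lemma ceF_le (hy : y ∈ F) (hxy : x ≤ y) : ceF F x ≤ y :=
  csInf_le ⟨x, fun _ hw => hw.2⟩ ⟨hy, hxy⟩

lemma flF_mem_inter (hF : IsClosed F) (hbelow : ∀ x : ℝ, ∃ z ∈ F, z ≤ x) (x : ℝ) :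
    flF F x ∈ F ∩ Iic x := by
  obtain ⟨z, hz, hzx⟩ := hbelow x
  exact (hF.inter isClosed_Iic).csSup_mem ⟨z, hz, hzx⟩ ⟨x, fun _ hw => hw.2⟩

lemma ceF_mem_inter (hF : IsClosed F) (habove : ∀ x : ℝ, ∃ z ∈ F, x ≤ z) (x : ℝ) :
    ceF F x ∈ F ∩ Ici x := by
  obtain ⟨z, hz, hxz⟩ := habove x
  exact (hF.inter isClosed_Ici).csInf_mem ⟨z, hz, hxz⟩ ⟨x, fun _ hw => hw.2⟩

lemma flF_lt_of_notMem (hF : IsClosed F) (hbelow : ∀ x : ℝ, ∃ z ∈ F, z ≤ x) (hx : x ∉ F) :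
    flF F x < x := by
  obtain ⟨hmem, hle⟩ := flF_mem_inter hF hbelow x
  exact lt_of_le_of_ne hle fun h => hx (h ▸ hmem)

lemma lt_ceF_of_notMem (hF : IsClosed F) (habove : ∀ x : ℝ, ∃ z ∈ F, x ≤ z) (hx : x ∉ F) :
    x < ceF F x := by
  obtain ⟨hmem, hle⟩ := ceF_mem_inter hF habove x
  exact lt_of_le_of_ne hle fun h => hx (h ▸ hmem)

lemma notMem_of_mem_Ioo_flF_ceF (hy : y ∈ Ioo (flF F x) (ceF F x)) : y ∉ F := fun hyF =>
  (le_total y x).elim (fun h => (le_flF hyF h).not_gt hy.1) fun h => (ceF_le hyF h).not_gt hy.2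

lemma flF_eq_of_mem_Ioo (hF : IsClosed F) (hbelow : ∀ x : ℝ, ∃ z ∈ F, z ≤ x)
    (hy : y ∈ Ioo (flF F x) (ceF F x)) : flF F y = flF F x := by
  have hmem := (flF_mem_inter hF hbelow x).1
  refine le_antisymm (csSup_le ⟨_, hmem, hy.1.le⟩ fun w ⟨hwF, hwy⟩ => ?_) (le_flF hmem hy.1.le)
  by_contra! hw
  exact notMem_of_mem_Ioo_flF_ceF ⟨hw, hwy.trans_lt hy.2⟩ hwF

lemma ceF_eq_of_mem_Ioo (hF : IsClosed F) (habove : ∀ x : ℝ, ∃ z ∈ F, x ≤ z)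
    (hy : y ∈ Ioo (flF F x) (ceF F x)) : ceF F y = ceF F x := by
  have hmem := (ceF_mem_inter hF habove x).1
  refine le_antisymm (ceF_le hmem hy.2.le) (le_csInf ⟨_, hmem, hy.2.le⟩ fun w ⟨hwF, hyw⟩ => ?_)
  by_contra! hw
  exact notMem_of_mem_Ioo_flF_ceF ⟨hy.1.trans_le hyw, hw⟩ hwF

lemma infDist_eq_min (hF : IsClosed F) (hbelow : ∀ x : ℝ, ∃ z ∈ F, z ≤ x)
    (habove : ∀ x : ℝ, ∃ z ∈ F, x ≤ z) (x : ℝ) :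
    infDist x F = min (x - flF F x) (ceF F x - x) := by
  obtain ⟨hfl, hfl_le⟩ := flF_mem_inter hF hbelow x
  obtain ⟨hce, hce_ge⟩ := ceF_mem_inter hF habove x
  refine le_antisymm (le_min ?_ ?_) ((le_infDist ⟨_, hfl⟩).2 fun y hy => ?_)
  · simpa [Real.dist_eq, abs_of_nonneg (sub_nonneg.2 (mem_Iic.1 hfl_le))]
      using infDist_le_dist_of_mem (x := x) hfl
  · simpa [Real.dist_eq, abs_of_nonpos (sub_nonpos.2 (mem_Ici.1 hce_ge)), abs_sub_comm]
      using infDist_le_dist_of_mem (x := x) hce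
  rw [Real.dist_eq]
  rcases le_total y x with h | h
  · exact (min_le_left _ _).trans (by rw [abs_of_nonneg (sub_nonneg.2 h)]; linarith [le_flF hy h])
  · exact (min_le_right _ _).trans
      (by rw [abs_of_nonpos (sub_nonpos.2 h)]; linarith [ceF_le hy h])

lemma infDist_eq_min_of_mem_Ioo (hF : IsClosed F) (hbelow : ∀ x : ℝ, ∃ z ∈ F, z ≤ x)
    (habove : ∀ x : ℝ, ∃ z ∈ F, x ≤ z) (hy : y ∈ Ioo (flF F x) (ceF F x)) :
    infDist y F = min (y - flF F x) (ceF F x - y) := by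
  rw [infDist_eq_min hF hbelow habove, flF_eq_of_mem_Ioo hF hbelow hy,
    ceF_eq_of_mem_Ioo hF habove hy]

lemma infDist_le_of_ceF_sub_flF_le (hF : IsClosed F) (hbelow : ∀ x : ℝ, ∃ z ∈ F, z ≤ x)
    (habove : ∀ x : ℝ, ∃ z ∈ F, x ≤ z) {δ : ℝ} (hgap : ceF F x - flF F x ≤ 2 * δ) :
    infDist x F ≤ δ := by
  rw [infDist_eq_min hF hbelow habove]
  linarith [min_le_left (x - flF F x) (ceF F x - x), min_le_right (x - flF F x) (ceF F x - x)]

/-- The gap around `x` contains a rational `q`, and its midpoint is `(flF F q + ceF F q) / 2`. -/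
lemma mem_range_midpoint_of_notMem (hF : IsClosed F) (hbelow : ∀ x : ℝ, ∃ z ∈ F, z ≤ x)
    (habove : ∀ x : ℝ, ∃ z ∈ F, x ≤ z) (hx : x ∉ F) (hmid : x - flF F x = ceF F x - x) :
    x ∈ range fun q : ℚ => (flF F q + ceF F q) / 2 := by
  obtain ⟨q, hq⟩ := exists_rat_btwn
    ((flF_lt_of_notMem hF hbelow hx).trans (lt_ceF_of_notMem hF habove hx))
  refine ⟨q, ?_⟩
  simp only [flF_eq_of_mem_Ioo hF hbelow hq, ceF_eq_of_mem_Ioo hF habove hq]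
  linarith

lemma infDist_eventuallyEq_abs_sub (hF : IsClosed F) (hbelow : ∀ x : ℝ, ∃ z ∈ F, z ≤ x)
    (habove : ∀ x : ℝ, ∃ z ∈ F, x ≤ z) (hx : x ∉ F) (hmid : x - flF F x ≠ ceF F x - x) {r : ℝ}
    (hr_mem : r = flF F x ∨ r = ceF F x) (hr_near : |r - x| = min (x - flF F x) (ceF F x - x)) :
    (infDist · F) =ᶠ[𝓝 x] fun y => |y - r| := by
  have hfl := flF_lt_of_notMem hF hbelow hx
  have hce := lt_ceF_of_notMem hF habove hx
  rcases hmid.lt_or_gt with h | h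
  · have hr : r = flF F x := hr_mem.resolve_right fun hr => by
      rw [hr, abs_of_pos (sub_pos.2 hce), min_eq_left h.le] at hr_near
      linarith
    filter_upwards [Ioo_mem_nhds hfl (by linarith : x < (flF F x + ceF F x) / 2)] with y hy
    rw [infDist_eq_min_of_mem_Ioo hF hbelow habove ⟨hy.1, by linarith [hy.2]⟩,
      min_eq_left (by linarith [hy.2]), hr, abs_of_pos (sub_pos.2 hy.1)]
  · have hr : r = ceF F x := hr_mem.resolve_left fun hr => by
      rw [hr, abs_of_neg (sub_neg.2 hfl), min_eq_right h.le] at hr_near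
      linarith
    filter_upwards [Ioo_mem_nhds (by linarith : (flF F x + ceF F x) / 2 < x) hce] with y hy
    rw [infDist_eq_min_of_mem_Ioo hF hbelow habove ⟨by linarith [hy.1], hy.2⟩,
      min_eq_right (by linarith [hy.1]), hr, abs_of_neg (sub_neg.2 hy.2), neg_sub]

lemma hasDerivAt_neg_infDist_pow_div (hF : IsClosed F) (hbelow : ∀ x : ℝ, ∃ z ∈ F, z ≤ x)
    (habove : ∀ x : ℝ, ∃ z ∈ F, x ≤ z) {k : ℕ} (hk : Odd k)
    (hx : x ∉ range fun q : ℚ => (flF F q + ceF F q) / 2) {r : ℝ}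
    (hr_mem : r = flF F x ∨ r = ceF F x) (hr_near : |r - x| = min (x - flF F x) (ceF F x - x)) :
    HasDerivAt (fun y => -infDist y F ^ (k + 1) / (k + 1)) ((r - x) ^ k) x := by
  by_cases hxF : x ∈ F
  · have hr : r = x := by
      have h0 : |r - x| ≤ 0 :=
        (hr_near.trans_le (min_le_left _ _)).trans (by linarith [le_flF hxF le_rfl])
      exact sub_eq_zero.1 (abs_nonpos_iff.1 h0)
    rw [hr, sub_self, zero_pow hk.pos.ne']
    have hpow := hasFDerivAt_infDist_pow_of_mem hxF (Nat.lt_add_of_pos_left hk.pos)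
    simpa using hpow.hasDerivAt.neg.div_const ((k : ℝ) + 1)
  have hmid : x - flF F x ≠ ceF F x - x := fun h =>
    hx (mem_range_midpoint_of_notMem hF hbelow habove hxF h)
  have hpoly : HasDerivAt (fun y => -(y - r) ^ (k + 1) / (k + 1)) ((r - x) ^ k) x := by
    refine ((((hasDerivAt_id x).sub_const r).pow (k + 1)).neg.div_const
      ((k : ℝ) + 1)).congr_deriv ?_
    rw [id, ← neg_sub, Nat.add_sub_cancel, hk.neg_pow]
    push_cast
    field_simp
  refine hpoly.congr_of_eventuallyEq ?_
  filter_upwards [infDist_eventuallyEq_abs_sub hF hbelow habove hxF hmid hr_mem hr_near] with y hy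
  rw [hy, hk.add_one.pow_abs]

end Grid

theorem error_int_nearest_odd_add_general
    (F : Set ℝ) (hF_closed : IsClosed F)
    (hF_below : ∀ x : ℝ, ∃ z ∈ F, z ≤ x) (hF_above : ∀ x : ℝ, ∃ z ∈ F, x ≤ z)
    (rd : ℝ → ℝ) (hrd_meas : Measurable rd)
    (hrd_mem : ∀ x : ℝ, rd x = flF F x ∨ rd x = ceF F x)
    (hrd_near : ∀ x : ℝ, |rd x - x| = min (x - flF F x) (ceF F x - x))
    (δ : ℝ) (hgap : ∀ x : ℝ, ceF F x - flF F x ≤ 2 * δ)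
    (k : ℕ) (hodd : Odd k) (a b : ℝ) :
    |∫ x in a..b, (rd x - x) ^ k| ≤ (1 / (k + 1)) * δ ^ (k + 1) := by
  have hdist_le : ∀ x, infDist x F ≤ δ := fun x =>
    infDist_le_of_ceF_sub_flF_le hF_closed hF_below hF_above (hgap x)
  have herr : ∀ x, |rd x - x| = infDist x F := fun x => by
    rw [hrd_near, infDist_eq_min hF_closed hF_below hF_above]
  have hint : IntervalIntegrable (fun x => (rd x - x) ^ k) volume a b :=
    (intervalIntegrable_const (c := δ ^ k)).mono_fun'
      ((hrd_meas.sub measurable_id).pow_const k).aestronglyMeasurable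
      (ae_of_all _ fun x => by
        simpa only [norm_pow, Real.norm_eq_abs, herr] using
          pow_le_pow_left₀ infDist_nonneg (hdist_le x) k)
  rw [integral_eq_of_hasDerivAt_off_countable (fun y => -infDist y F ^ (k + 1) / (k + 1)) _
    (countable_range _) (((continuous_infDist_pt F).pow (k + 1)).neg.div_const _).continuousOn
    (fun x hx => hasDerivAt_neg_infDist_pow_div hF_closed hF_below hF_above hodd hx.2
      (hrd_mem x) (hrd_near x)) hint, neg_div, neg_div, neg_sub_neg]
  have hbound : ∀ x, 0 ≤ infDist x F ^ (k + 1) / (k + 1) ∧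
      infDist x F ^ (k + 1) / (k + 1) ≤ 1 / (k + 1) * δ ^ (k + 1) := fun x =>
    ⟨div_nonneg (pow_nonneg infDist_nonneg _) (by positivity), by
      rw [one_div_mul_eq_div]
      gcongr
      exacts [infDist_nonneg, hdist_le x]⟩
  exact abs_sub_le_of_nonneg_of_le (hbound a).1 (hbound a).2 (hbound b).1 (hbound b).2

theorem error_int_nearest_odd_add
    (F : Set ℝ) (hF_closed : IsClosed F) (hF_ne : F.Nonempty)
    (hF_below : ∀ x : ℝ, ∃ z ∈ F, z ≤ x) (hF_above : ∀ x : ℝ, ∃ z ∈ F, x ≤ z)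
    (rd : ℝ → ℝ) (hrd_meas : Measurable rd)
    (hrd_mem : ∀ x : ℝ, rd x = flF F x ∨ rd x = ceF F x)
    (hrd_near : ∀ x : ℝ, |rd x - x| = min (x - flF F x) (ceF F x - x))
    (δ : ℝ) (hδ : 0 < δ) (hgap : ∀ x : ℝ, ceF F x - flF F x ≤ 2 * δ)
    (k : ℕ) (hk : 1 ≤ k) (hodd : Odd k) (a b : ℝ) (hab : a ≤ b) :
    |∫ x in a..b, (rd x - x) ^ k| ≤ (1 / (k + 1)) * δ ^ (k + 1) :=
  error_int_nearest_odd_add_general F hF_closed hF_below hF_above rd hrd_meas hrd_mem hrd_near δ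
    hgap k hodd a b
end

section
/- For every odd integer k ≥ 1 and all real numbers a ≤ b, |∫_a^b err(x)^k dx| ≤ (1/(k+1)) · max(|a|, |b|)^{k+1} · ε^{k+1}. -/
open MeasureTheory

/-!
Write `d x = infDist x F = |err x|`. Off the points of `F` and the midpoints of the gaps of `F`,
`d` coincides near `x` with `|y - rd x|`; as `k + 1` is even, `G = -d ^ (k + 1) / (k + 1)` is then
locally the polynomial `-(rd x - y) ^ (k + 1) / (k + 1)`, whose derivative at `x` is `err x ^ k`.
At points of `F` both `G'` and `err ^ k` vanish because `d y ≤ |y - x|`. The gaps are disjoint open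
intervals, so there are countably many midpoints, and the fundamental theorem of calculus with a
countable exceptional set gives `∫_a^b err ^ k = (d a ^ (k + 1) - d b ^ (k + 1)) / (k + 1)`.
Finally `0 ≤ d x ≤ ε |x|` at both endpoints.
-/

open Set Metric Filter Topology

section Gaps

variable {F : Set ℝ} {x : ℝ}

lemma flF_le_self (hx : ∃ z ∈ F, z ≤ x) : flF F x ≤ x := by
  obtain ⟨z, hz, hzx⟩ := hx
  exact csSup_le ⟨z, hz, hzx⟩ fun _ hy => hy.2

lemma self_le_ceF (hx : ∃ z ∈ F, x ≤ z) : x ≤ ceF F x := by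
  obtain ⟨z, hz, hxz⟩ := hx
  exact le_csInf ⟨z, hz, hxz⟩ fun _ hy => hy.2

lemma flF_mem (hF : IsClosed F) (hx : ∃ z ∈ F, z ≤ x) : flF F x ∈ F := by
  obtain ⟨z, hz, hzx⟩ := hx
  exact ((hF.inter isClosed_Iic).csSup_mem ⟨z, hz, hzx⟩ ⟨x, fun _ hy => hy.2⟩).1

lemma ceF_mem (hF : IsClosed F) (hx : ∃ z ∈ F, x ≤ z) : ceF F x ∈ F := by
  obtain ⟨z, hz, hxz⟩ := hx
  exact ((hF.inter isClosed_Ici).csInf_mem ⟨z, hz, hxz⟩ ⟨x, fun _ hy => hy.2⟩).1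

lemma le_flF_s13 {z : ℝ} (hz : z ∈ F) (hzx : z ≤ x) : z ≤ flF F x :=
  le_csSup ⟨x, fun _ hy => hy.2⟩ ⟨hz, hzx⟩

lemma ceF_le_s13 {z : ℝ} (hz : z ∈ F) (hxz : x ≤ z) : ceF F x ≤ z :=
  csInf_le ⟨x, fun _ hy => hy.2⟩ ⟨hz, hxz⟩

lemma disjoint_Ioo_flF_ceF : Disjoint (Ioo (flF F x) (ceF F x)) F := by
  refine disjoint_left.2 fun y ⟨hfy, hyg⟩ hy => ?_
  rcases le_total y x with hyx | hxy
  · exact (le_flF_s13 hy hyx).not_gt hfy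
  · exact (ceF_le_s13 hy hxy).not_gt hyg

lemma flF_lt_self (hF : IsClosed F) (hx : ∃ z ∈ F, z ≤ x) (hxF : x ∉ F) : flF F x < x :=
  (flF_le_self hx).lt_of_ne fun h => hxF (h ▸ flF_mem hF hx)

lemma self_lt_ceF (hF : IsClosed F) (hx : ∃ z ∈ F, x ≤ z) (hxF : x ∉ F) : x < ceF F x :=
  (self_le_ceF hx).lt_of_ne fun h => hxF (h ▸ ceF_mem hF hx)

lemma infDist_eq_min_of_mem_Icc {f g y : ℝ} (hf : f ∈ F) (hg : g ∈ F)
    (hgap : Disjoint (Ioo f g) F) (hy : y ∈ Icc f g) : infDist y F = min (y - f) (g - y) := by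
  refine le_antisymm (le_min ?_ ?_) ((le_infDist ⟨f, hf⟩).2 fun z hz => ?_)
  · simpa [Real.dist_eq, abs_of_nonneg (sub_nonneg.2 hy.1)] using infDist_le_dist_of_mem hf (x := y)
  · simpa [Real.dist_eq, abs_of_nonpos (sub_nonpos.2 hy.2)] using infDist_le_dist_of_mem hg (x := y)
  · rw [Real.dist_eq]
    rcases le_or_gt z f with hzf | hfz
    · exact (min_le_left _ _).trans ((sub_le_sub_left hzf y).trans (le_abs_self _))
    · have hgz : g ≤ z := not_lt.1 fun hzg => disjoint_left.1 hgap ⟨hfz, hzg⟩ hz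
      rw [abs_sub_comm]
      exact (min_le_right _ _).trans ((sub_le_sub_right hgz y).trans (le_abs_self _))

lemma infDist_eq_min_flF_ceF (hF : IsClosed F) (hbelow : ∃ z ∈ F, z ≤ x)
    (habove : ∃ z ∈ F, x ≤ z) : infDist x F = min (x - flF F x) (ceF F x - x) :=
  infDist_eq_min_of_mem_Icc (flF_mem hF hbelow) (ceF_mem hF habove) disjoint_Ioo_flF_ceF
    ⟨flF_le_self hbelow, self_le_ceF habove⟩

lemma infDist_eventuallyEq_abs_sub_s13 {f g c : ℝ} (hf : f ∈ F) (hg : g ∈ F)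
    (hgap : Disjoint (Ioo f g) F) (hx : x ∈ Ioo f g)
    (hc : c = f ∧ x - f < g - x ∨ c = g ∧ g - x < x - f) :
    (infDist · F) =ᶠ[𝓝 x] fun y => |y - c| := by
  rcases hc with ⟨rfl, hc⟩ | ⟨rfl, hc⟩
  · filter_upwards [Ioo_mem_nhds hx.1 (show x < (c + g) / 2 by linarith)] with y hy
    rw [infDist_eq_min_of_mem_Icc hf hg hgap ⟨hy.1.le, by linarith [hy.2, hx.1, hx.2]⟩,
      min_eq_left (by linarith [hy.2]), abs_of_pos (sub_pos.2 hy.1)]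
  · filter_upwards [Ioo_mem_nhds (show (f + c) / 2 < x by linarith) hx.2] with y hy
    rw [infDist_eq_min_of_mem_Icc hf hg hgap ⟨by linarith [hy.1, hx.1, hx.2], hy.2.le⟩,
      min_eq_right (by linarith [hy.1]), abs_of_neg (sub_neg.2 hy.2), neg_sub]

def gapMidpoints (F : Set ℝ) : Set ℝ := {x | x ∉ F ∧ x - flF F x = ceF F x - x}

lemma countable_gapMidpoints (hF : IsClosed F) (hbelow : ∀ x, ∃ z ∈ F, z ≤ x)
    (habove : ∀ x, ∃ z ∈ F, x ≤ z) : (gapMidpoints F).Countable := by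
  refine PairwiseDisjoint.countable_of_isOpen (s := fun m => Ioo (flF F m) (ceF F m)) ?_
    (fun _ _ => isOpen_Ioo)
    fun m hm => ⟨m, flF_lt_self hF (hbelow m) hm.1, self_lt_ceF hF (habove m) hm.1⟩
  intro m hm m' hm' hne
  refine disjoint_left.2 fun y ⟨hfy, hyg⟩ ⟨hfy', hyg'⟩ => hne ?_
  have hfl : flF F m = flF F m' := le_antisymm
    (not_lt.1 fun h => disjoint_left.1 disjoint_Ioo_flF_ceF ⟨h, hfy.trans hyg'⟩
      (flF_mem hF (hbelow m)))
    (not_lt.1 fun h => disjoint_left.1 disjoint_Ioo_flF_ceF ⟨h, hfy'.trans hyg⟩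
      (flF_mem hF (hbelow m')))
  have hce : ceF F m = ceF F m' := le_antisymm
    (not_lt.1 fun h => disjoint_left.1 disjoint_Ioo_flF_ceF ⟨hfy.trans hyg', h⟩
      (ceF_mem hF (habove m')))
    (not_lt.1 fun h => disjoint_left.1 disjoint_Ioo_flF_ceF ⟨hfy'.trans hyg, h⟩
      (ceF_mem hF (habove m)))
  linarith [hm.2, hm'.2]

end Gaps

lemma hasDerivAt_infDist_pow_of_mem {F : Set ℝ} {x : ℝ} {n : ℕ} (hn : 1 < n) (hx : x ∈ F) :
    HasDerivAt (fun y => infDist y F ^ n) 0 x := by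
  have hO : (fun y => infDist y F ^ n) =O[𝓝 x] fun y => ‖y - x‖ ^ n := by
    refine Asymptotics.IsBigO.of_bound 1 (Eventually.of_forall fun y => ?_)
    rw [one_mul, norm_pow, norm_pow, norm_norm, Real.norm_of_nonneg infDist_nonneg]
    refine pow_le_pow_left₀ infDist_nonneg ?_ n
    simpa [Real.dist_eq, Real.norm_eq_abs] using infDist_le_dist_of_mem hx (x := y)
  simpa using (hO.hasFDerivAt hn).hasDerivAt

lemma hasDerivAt_neg_sub_pow_succ_div (c x : ℝ) (n : ℕ) :
    HasDerivAt (fun y => -(c - y) ^ (n + 1) / (n + 1)) ((c - x) ^ n) x := by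
  refine ((((hasDerivAt_id' x).const_sub c).fun_pow (n + 1)).fun_neg.div_const
    ((n : ℝ) + 1)).congr_deriv ?_
  field_simp
  push_cast
  ring

section Rounding

variable {F : Set ℝ} {rd : ℝ → ℝ}

lemma abs_rd_sub_eq_infDist (hF : IsClosed F) (hbelow : ∀ x, ∃ z ∈ F, z ≤ x)
    (habove : ∀ x, ∃ z ∈ F, x ≤ z)
    (hrd_near : ∀ x, |rd x - x| = min (x - flF F x) (ceF F x - x)) (x : ℝ) :
    |rd x - x| = infDist x F :=
  (hrd_near x).trans (infDist_eq_min_flF_ceF hF (hbelow x) (habove x)).symm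

lemma hasDerivAt_neg_infDist_pow_succ_div (hF : IsClosed F) (hbelow : ∀ x, ∃ z ∈ F, z ≤ x)
    (habove : ∀ x, ∃ z ∈ F, x ≤ z) (hrd_mem : ∀ x, rd x = flF F x ∨ rd x = ceF F x)
    (hrd_near : ∀ x, |rd x - x| = min (x - flF F x) (ceF F x - x))
    {k : ℕ} (hk : 1 ≤ k) (hodd : Odd k) {x : ℝ} (hx : x ∉ gapMidpoints F) :
    HasDerivAt (fun y => -infDist y F ^ (k + 1) / (k + 1)) ((rd x - x) ^ k) x := by
  by_cases hxF : x ∈ F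
  · have hrd : rd x - x = 0 := by
      rw [← abs_eq_zero, abs_rd_sub_eq_infDist hF hbelow habove hrd_near, infDist_zero_of_mem hxF]
    simpa [hrd, zero_pow (by omega : k ≠ 0)] using
      ((hasDerivAt_infDist_pow_of_mem (by omega) hxF).neg.div_const ((k : ℝ) + 1))
  have hfx := flF_lt_self hF (hbelow x) hxF
  have hxg := self_lt_ceF hF (habove x) hxF
  have hmid : x - flF F x ≠ ceF F x - x := fun h => hx ⟨hxF, h⟩
  have hnear : rd x = flF F x ∧ x - flF F x < ceF F x - x ∨
      rd x = ceF F x ∧ ceF F x - x < x - flF F x := by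
    have h := hrd_near x
    rcases hrd_mem x with hr | hr <;> rw [hr] at h ⊢
    · rw [abs_of_neg (by linarith), neg_sub] at h
      exact .inl ⟨rfl, (h ▸ min_le_right _ _).lt_of_ne hmid⟩
    · rw [abs_of_pos (by linarith)] at h
      exact .inr ⟨rfl, (h ▸ min_le_left _ _).lt_of_ne (Ne.symm hmid)⟩
  refine (hasDerivAt_neg_sub_pow_succ_div (rd x) x k).congr_of_eventuallyEq ?_
  filter_upwards [infDist_eventuallyEq_abs_sub_s13 (flF_mem hF (hbelow x)) (ceF_mem hF (habove x))
    disjoint_Ioo_flF_ceF ⟨hfx, hxg⟩ hnear] with y hy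
  rw [hy, abs_sub_comm, hodd.add_one.pow_abs]

theorem integral_rd_sub_pow_eq (hF : IsClosed F) (hbelow : ∀ x, ∃ z ∈ F, z ≤ x)
    (habove : ∀ x, ∃ z ∈ F, x ≤ z) (hrd_meas : Measurable rd)
    (hrd_mem : ∀ x, rd x = flF F x ∨ rd x = ceF F x)
    (hrd_near : ∀ x, |rd x - x| = min (x - flF F x) (ceF F x - x))
    {k : ℕ} (hk : 1 ≤ k) (hodd : Odd k) (a b : ℝ) :
    ∫ x in a..b, (rd x - x) ^ k = (infDist a F ^ (k + 1) - infDist b F ^ (k + 1)) / (k + 1) := by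
  have hint : IntervalIntegrable (fun x => (rd x - x) ^ k) volume a b :=
    (((continuous_infDist_pt F).pow k).intervalIntegrable a b).mono_fun'
      ((hrd_meas.sub measurable_id).pow_const k).aestronglyMeasurable
      (Eventually.of_forall fun x => by
        simp [abs_rd_sub_eq_infDist hF hbelow habove hrd_near])
  rw [integral_eq_of_hasDerivAt_off_countable _ _ (countable_gapMidpoints hF hbelow habove)
    (by fun_prop : Continuous fun y => -infDist y F ^ (k + 1) / (k + 1)).continuousOn
    (fun x hx => hasDerivAt_neg_infDist_pow_succ_div hF hbelow habove hrd_mem hrd_near hk hodd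
      hx.2) hint]
  ring

end Rounding

theorem error_int_nearest_odd_mult_general
    (F : Set ℝ) (hF_closed : IsClosed F)
    (hF_below : ∀ x : ℝ, ∃ z ∈ F, z ≤ x) (hF_above : ∀ x : ℝ, ∃ z ∈ F, x ≤ z)
    (rd : ℝ → ℝ) (hrd_meas : Measurable rd)
    (hrd_mem : ∀ x : ℝ, rd x = flF F x ∨ rd x = ceF F x)
    (hrd_near : ∀ x : ℝ, |rd x - x| = min (x - flF F x) (ceF F x - x))
    (ε : ℝ) (hε0 : 0 ≤ ε)
    (hbound : ∀ x : ℝ, |rd x - x| ≤ ε * |x|)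
    (k : ℕ) (hk : 1 ≤ k) (hodd : Odd k) (a b : ℝ) :
    |∫ x in a..b, (rd x - x) ^ k|
      ≤ (1 / (k + 1)) * max |a| |b| ^ (k + 1) * ε ^ (k + 1) := by
  set M := max |a| |b|
  have hdist : ∀ x, |x| ≤ M → infDist x F ^ (k + 1) ≤ (ε * M) ^ (k + 1) := fun x hx =>
    pow_le_pow_left₀ infDist_nonneg ((abs_rd_sub_eq_infDist hF_closed hF_below hF_above hrd_near
      x).symm.le.trans ((hbound x).trans (mul_le_mul_of_nonneg_left hx hε0))) _
  rw [integral_rd_sub_pow_eq hF_closed hF_below hF_above hrd_meas hrd_mem hrd_near hk hodd,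
    abs_div, abs_of_pos (by positivity : (0 : ℝ) < k + 1)]
  calc |infDist a F ^ (k + 1) - infDist b F ^ (k + 1)| / (k + 1)
      ≤ (ε * M) ^ (k + 1) / (k + 1) := by
        gcongr
        exact abs_sub_le_of_nonneg_of_le (pow_nonneg infDist_nonneg _) (hdist a (le_max_left _ _))
          (pow_nonneg infDist_nonneg _) (hdist b (le_max_right _ _))
    _ = 1 / (k + 1) * M ^ (k + 1) * ε ^ (k + 1) := by rw [mul_pow]; ring

theorem error_int_nearest_odd_mult
    (F : Set ℝ) (hF_closed : IsClosed F) (hF_ne : F.Nonempty)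
    (hF_below : ∀ x : ℝ, ∃ z ∈ F, z ≤ x) (hF_above : ∀ x : ℝ, ∃ z ∈ F, x ≤ z)
    (rd : ℝ → ℝ) (hrd_meas : Measurable rd)
    (hrd_mem : ∀ x : ℝ, rd x = flF F x ∨ rd x = ceF F x)
    (hrd_near : ∀ x : ℝ, |rd x - x| = min (x - flF F x) (ceF F x - x))
    (ε : ℝ) (hε0 : 0 ≤ ε) (hε1 : ε < 1)
    (hbound : ∀ x : ℝ, |rd x - x| ≤ ε * |x|)
    (k : ℕ) (hk : 1 ≤ k) (hodd : Odd k) (a b : ℝ) (hab : a ≤ b) :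
    |∫ x in a..b, (rd x - x) ^ k|
      ≤ (1 / (k + 1)) * max |a| |b| ^ (k + 1) * ε ^ (k + 1) :=
  error_int_nearest_odd_mult_general F hF_closed hF_below hF_above rd hrd_meas hrd_mem hrd_near ε
    hε0 hbound k hk hodd a b
end

section
/- For every integer n ≥ 1 and all real numbers a ≤ b, |∫_a^b |err(x)|^n dx − ((b − a)/(n+1)) · δ^n| ≤ (4/(n+1)) · δ^{n+1}. -/
/-!
The rounding error `|rd x - x|` is the distance from `x` to the mesh, hence continuous and
`2δ`-periodic, and equal to `|x - α|` on `[α - δ, α + δ]`. Consequently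
`Φ x = ∫_α^x |err|^n - (x - α) δ^n / (n + 1)` is `2δ`-periodic (its increment over a period is
zero), and on `[α - δ, α + δ]` it equals `y (|y|^n - δ^n) / (n + 1)` with `y = x - α`, which is at
most `δ^(n+1) / (n + 1)` in absolute value. The quantity to bound is `Φ b - Φ a`.
-/

open MeasureTheory Metric Set

namespace Function.Periodic

variable {E : Type*} [NormedAddCommGroup E] [NormedSpace ℝ E] {f : ℝ → E} {T : ℝ}

theorem periodic_intervalIntegral_sub_smul (hf : Periodic f T)
    (hint : ∀ a b, IntervalIntegrable f volume a b) {q : ℝ} {c : E}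
    (hmean : ∫ x in q..q + T, f x = T • c) (p : ℝ) :
    Periodic (fun x => (∫ t in p..x, f t) - (x - p) • c) T := by
  intro x
  dsimp only
  rw [← intervalIntegral.integral_add_adjacent_intervals (hint p x) (hint x (x + T)),
    hf.intervalIntegral_add_eq x q, hmean]
  simp only [add_sub_right_comm x T p, add_smul]
  abel

theorem norm_intervalIntegral_sub_smul_le (hf : Periodic f T) (hT : 0 < T)
    (hint : ∀ a b, IntervalIntegrable f volume a b) {p q B : ℝ} {c : E}
    (hmean : ∫ x in q..q + T, f x = T • c)
    (hbound : ∀ x ∈ Ico q (q + T), ‖(∫ t in p..x, f t) - (x - p) • c‖ ≤ B) (a b : ℝ) :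
    ‖(∫ x in a..b, f x) - (b - a) • c‖ ≤ 2 * B := by
  set Φ := fun x => (∫ t in p..x, f t) - (x - p) • c
  have hΦ_le (x : ℝ) : ‖Φ x‖ ≤ B := by
    obtain ⟨y, hy, hxy⟩ :=
      (hf.periodic_intervalIntegral_sub_smul hint hmean p).exists_mem_Ico hT x q
    rw [show Φ x = Φ y from hxy]
    exact hbound y hy
  have hΦ_sub : (∫ x in a..b, f x) - (b - a) • c = Φ b - Φ a := by
    rw [← intervalIntegral.integral_interval_sub_left (hint p b) (hint p a)]
    simp only [Φ, sub_smul]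
    abel
  calc ‖(∫ x in a..b, f x) - (b - a) • c‖ = ‖Φ b - Φ a‖ := by rw [hΦ_sub]
    _ ≤ ‖Φ b‖ + ‖Φ a‖ := norm_sub_le _ _
    _ ≤ 2 * B := by linarith [hΦ_le a, hΦ_le b]

end Function.Periodic

theorem Metric.infDist_eq_dist_of_forall_dist_le {X : Type*} [PseudoMetricSpace X] {s : Set X}
    {x y : X} (hy : y ∈ s) (h : ∀ z ∈ s, dist x y ≤ dist x z) : infDist x s = dist x y :=
  le_antisymm (infDist_le_dist_of_mem hy) ((le_infDist ⟨y, hy⟩).2 h)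

theorem Metric.infDist_add_right_of_image_eq {G : Type*} [SeminormedAddCommGroup G] {s : Set G}
    {T : G} (hs : (· + T) '' s = s) (x : G) : infDist (x + T) s = infDist x s := by
  conv_lhs => rw [← hs]
  exact infDist_image (isometry_add_right T)

theorem intervalIntegrable_infDist_pow (s : Set ℝ) (n : ℕ) (a b : ℝ) :
    IntervalIntegrable (fun x => infDist x s ^ n) volume a b :=
  ((continuous_infDist_pt s).pow n).intervalIntegrable a b

theorem integral_abs_pow (n : ℕ) (y : ℝ) : ∫ s in 0..y, |s| ^ n = y * |y| ^ n / (n + 1) := by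
  rcases le_total 0 y with hy | hy
  · have hEq : EqOn (fun s => |s| ^ n) (fun s => s ^ n) (uIcc 0 y) := fun s hs => by
      rw [uIcc_of_le hy] at hs
      simp only [abs_of_nonneg hs.1]
    rw [intervalIntegral.integral_congr hEq, integral_pow, abs_of_nonneg hy]
    ring
  · have hEq : EqOn (fun s => |s| ^ n) (fun s => (-s) ^ n) (uIcc 0 y) := fun s hs => by
      rw [uIcc_of_ge hy] at hs
      simp only [abs_of_nonpos hs.2]
    rw [intervalIntegral.integral_congr hEq, intervalIntegral.integral_comp_neg (fun s => s ^ n),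
      integral_pow, abs_of_nonpos hy]
    ring

theorem abs_mul_abs_pow_sub_pow_le {y δ : ℝ} (hy : |y| ≤ δ) (n : ℕ) :
    |y * (|y| ^ n - δ ^ n)| ≤ δ ^ (n + 1) := by
  have hpow : |y| ^ n ≤ δ ^ n := pow_le_pow_left₀ (abs_nonneg y) hy n
  rw [abs_mul, abs_of_nonpos (sub_nonpos.2 hpow), pow_succ']
  have : 0 ≤ |y| ^ n := pow_nonneg (abs_nonneg y) n
  exact mul_le_mul hy (by linarith) (by linarith) ((abs_nonneg y).trans hy)

def mesh (δ α : ℝ) : Set ℝ := range fun z : ℤ => 2 * δ * z + α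

section Mesh

variable {δ α : ℝ}

theorem image_add_mesh : (· + 2 * δ) '' mesh δ α = mesh δ α := by
  rw [mesh, ← range_comp,
    ← (Equiv.addRight (1 : ℤ)).surjective.range_comp (fun z : ℤ => 2 * δ * z + α)]
  congr 1
  funext z
  simp only [Function.comp_apply, Equiv.coe_addRight, Int.cast_add, Int.cast_one]
  ring

theorem infDist_mesh_of_abs_sub_le {x : ℝ} (hx : |x - α| ≤ δ) :
    infDist x (mesh δ α) = |x - α| := by
  rw [infDist_eq_dist_of_forall_dist_le (show α ∈ mesh δ α from ⟨0, by simp⟩), Real.dist_eq]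
  rintro _ ⟨z, rfl⟩
  simp only [Real.dist_eq]
  rcases eq_or_ne z 0 with rfl | hz
  · simp
  have hδ : 0 ≤ δ := (abs_nonneg _).trans hx
  have hfar : 2 * δ ≤ |2 * δ * z| := by
    rw [abs_mul, abs_of_nonneg (by positivity : 0 ≤ 2 * δ)]
    exact le_mul_of_one_le_right (by positivity) (by exact_mod_cast Int.one_le_abs hz)
  calc |x - α| ≤ |2 * δ * z| - |x - α| := by linarith
    _ ≤ |2 * δ * z - (x - α)| := abs_sub_abs_le_abs_sub _ _
    _ = |x - (2 * δ * z + α)| := by rw [abs_sub_comm]; ring_nf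

theorem integral_infDist_mesh_pow {x : ℝ} (hx : |x - α| ≤ δ) (n : ℕ) :
    ∫ t in α..x, infDist t (mesh δ α) ^ n = (x - α) * |x - α| ^ n / (n + 1) := by
  have hEq : EqOn (fun t => infDist t (mesh δ α) ^ n) (fun t => |t - α| ^ n) (uIcc α x) :=
    fun t ht => by simp only [infDist_mesh_of_abs_sub_le ((abs_sub_left_of_mem_uIcc ht).trans hx)]
  rw [intervalIntegral.integral_congr hEq,
    intervalIntegral.integral_comp_sub_right (fun s => |s| ^ n), sub_self, integral_abs_pow]

theorem integral_infDist_mesh_pow_period (hδ : 0 ≤ δ) (n : ℕ) :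
    ∫ t in (α - δ)..(α - δ) + 2 * δ, infDist t (mesh δ α) ^ n = 2 * δ * (δ ^ n / (n + 1)) := by
  rw [show α - δ + 2 * δ = α + δ by ring,
    ← intervalIntegral.integral_interval_sub_left (intervalIntegrable_infDist_pow _ n α (α + δ))
      (intervalIntegrable_infDist_pow _ n α (α - δ)),
    integral_infDist_mesh_pow (by simp [abs_of_nonneg hδ]),
    integral_infDist_mesh_pow (by simp [abs_of_nonneg hδ]), add_sub_cancel_left,
    sub_sub_cancel_left, abs_neg, abs_of_nonneg hδ]
  ring

theorem abs_integral_infDist_mesh_pow_sub_le {x : ℝ} (hx : |x - α| ≤ δ) (n : ℕ) :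
    |(∫ t in α..x, infDist t (mesh δ α) ^ n) - (x - α) * (δ ^ n / (n + 1))| ≤
      δ ^ (n + 1) / (n + 1) := by
  rw [integral_infDist_mesh_pow hx, ← mul_div_assoc, ← sub_div, ← mul_sub, abs_div,
    abs_of_pos (by positivity : (0 : ℝ) < n + 1)]
  gcongr
  exact abs_mul_abs_pow_sub_pow_le hx n

end Mesh

theorem sheppard_general_two_sided_general
    (δ α : ℝ) (hδ : 0 < δ)
    (rd : ℝ → ℝ)
    (hrd_mem : ∀ x : ℝ, ∃ z : ℤ, rd x = 2 * δ * z + α)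
    (hrd_near : ∀ x : ℝ, ∀ z : ℤ, |rd x - x| ≤ |(2 * δ * z + α) - x|)
    (n : ℕ) (a b : ℝ) :
    |(∫ x in a..b, |rd x - x| ^ n) - ((b - a) / (n + 1)) * δ ^ n|
      ≤ (4 / (n + 1)) * δ ^ (n + 1) := by
  have herr (x : ℝ) : |rd x - x| = infDist x (mesh δ α) := by
    obtain ⟨z, hz⟩ := hrd_mem x
    rw [infDist_eq_dist_of_forall_dist_le (show rd x ∈ mesh δ α from ⟨z, hz.symm⟩),
      dist_comm, Real.dist_eq]
    rintro _ ⟨w, rfl⟩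
    simpa only [dist_comm x, Real.dist_eq] using hrd_near x w
  set f := fun x => infDist x (mesh δ α) ^ n
  have hper : Function.Periodic f (2 * δ) := fun x => by
    simp only [f, infDist_add_right_of_image_eq image_add_mesh]
  have hbound : ∀ x ∈ Ico (α - δ) ((α - δ) + 2 * δ),
      ‖(∫ t in α..x, f t) - (x - α) • (δ ^ n / (n + 1))‖ ≤ δ ^ (n + 1) / (n + 1) := by
    rintro x ⟨hlo, hhi⟩
    exact abs_integral_infDist_mesh_pow_sub_le (abs_le.2 ⟨by linarith, by linarith⟩) n
  calc |(∫ x in a..b, |rd x - x| ^ n) - ((b - a) / (n + 1)) * δ ^ n|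
      = ‖(∫ x in a..b, f x) - (b - a) • (δ ^ n / (n + 1))‖ := by
        simp only [herr, f, Real.norm_eq_abs, smul_eq_mul]; ring_nf
    _ ≤ 2 * (δ ^ (n + 1) / (n + 1)) :=
        hper.norm_intervalIntegral_sub_smul_le (by positivity)
          (intervalIntegrable_infDist_pow _ n)
          (integral_infDist_mesh_pow_period hδ.le n) hbound a b
    _ ≤ (4 / (n + 1)) * δ ^ (n + 1) := by
        rw [mul_div_assoc', div_mul_eq_mul_div]
        gcongr
        linarith [pow_pos hδ (n + 1)]

theorem sheppard_general_two_sided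
    (δ α : ℝ) (hδ : 0 < δ)
    (rd : ℝ → ℝ) (hrd_meas : Measurable rd)
    (hrd_mem : ∀ x : ℝ, ∃ z : ℤ, rd x = 2 * δ * z + α)
    (hrd_near : ∀ x : ℝ, ∀ z : ℤ, |rd x - x| ≤ |(2 * δ * z + α) - x|)
    (n : ℕ) (hn : 1 ≤ n) (a b : ℝ) (hab : a ≤ b) :
    |(∫ x in a..b, |rd x - x| ^ n) - ((b - a) / (n + 1)) * δ ^ n|
      ≤ (4 / (n + 1)) * δ ^ (n + 1) :=
  sheppard_general_two_sided_general δ α hδ rd hrd_mem hrd_near n a b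
end

section
/- For every integer k ≥ 1 and all real numbers a ≤ b, ∫_a^b A_k(x) dx ≤ (2/(k² + 3k + 2)) · (b − a) · h^k + (8/(k² + 3k + 2)) · h^{k+1}. -/
open MeasureTheory

/-- Largest mesh point of `{h·z + α : z ∈ ℤ}` at or below `x`. -/
noncomputable def meshFloor (h α x : ℝ) : ℝ := α + h * ⌊(x - α) / h⌋

/-- Smallest mesh point of `{h·z + α : z ∈ ℤ}` strictly above `meshFloor h α x`. -/
noncomputable def meshCeil (h α x : ℝ) : ℝ := meshFloor h α x + h

/-- Relative position of `x` between consecutive mesh points. -/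
noncomputable def meshFrac (h α x : ℝ) : ℝ := (x - meshFloor h α x) / h

/-- Expected `k`-th absolute error of stochastic rounding at `x`. -/
noncomputable def stochAbsErr (h α : ℝ) (k : ℕ) (x : ℝ) : ℝ :=
  (x - meshFloor h α x) ^ k * (1 - meshFrac h α x)
    + (meshCeil h α x - x) ^ k * meshFrac h α x

/-!
With `p = fract ((x - α) / h)` one has `x - fl(x) = h p` and `ce(x) - x = h (1 - p)`, so
`A_k(x) = h^k (p^k (1 - p) + (1 - p)^k p)`. Hence `A_k` is continuous (the profile takes the same
value at `p = 0` and `p = 1`), nonnegative and `h`-periodic, with integral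
`2 h^(k+1) / ((k + 1) (k + 2))` over one period. An interval of length `b - a` is covered by at
most `(b - a) / h + 1` consecutive periods.
-/

open Function

theorem Function.Periodic.intervalIntegral_le_of_nonneg {f : ℝ → ℝ} {T : ℝ} (hf : Periodic f T)
    (hT : 0 < T) (hf₀ : 0 ≤ f) (h_int : ∀ t₁ t₂, IntervalIntegrable f volume t₁ t₂)
    {a b : ℝ} (hab : a ≤ b) :
    ∫ x in a..b, f x ≤ ((b - a) / T + 1) * ∫ x in 0..T, f x := by
  set N := ⌈(b - a) / T⌉₊
  have hb : b ≤ a + N * T := by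
    have := Nat.le_ceil ((b - a) / T)
    rw [div_le_iff₀ hT] at this
    linarith
  have hN : (N : ℝ) < (b - a) / T + 1 :=
    Nat.ceil_lt_add_one (div_nonneg (sub_nonneg.2 hab) hT.le)
  have h_period : 0 ≤ ∫ x in 0..T, f x := intervalIntegral.integral_nonneg hT.le fun x _ => hf₀ x
  calc ∫ x in a..b, f x ≤ ∫ x in a..a + N * T, f x :=
        intervalIntegral.integral_mono_interval le_rfl hab hb (.of_forall hf₀) (h_int _ _)
    _ = N * ∫ x in 0..T, f x := by
        simpa [zsmul_eq_mul, hf.intervalIntegral_add_eq a 0] using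
          hf.intervalIntegral_add_zsmul_eq N a h_int
    _ ≤ ((b - a) / T + 1) * ∫ x in 0..T, f x := by gcongr

noncomputable def unitStochAbsErr (k : ℕ) (p : ℝ) : ℝ := p ^ k * (1 - p) + (1 - p) ^ k * p

theorem unitStochAbsErr_nonneg (k : ℕ) {p : ℝ} (hp₀ : 0 ≤ p) (hp₁ : p ≤ 1) :
    0 ≤ unitStochAbsErr k p := by
  have : 0 ≤ 1 - p := sub_nonneg.2 hp₁
  unfold unitStochAbsErr
  positivity

theorem continuous_unitStochAbsErr_fract (k : ℕ) :
    Continuous fun u => unitStochAbsErr k (Int.fract u) :=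
  ContinuousOn.comp_fract'' (f := unitStochAbsErr k)
    (Continuous.continuousOn (by unfold unitStochAbsErr; fun_prop)) (by simp [unitStochAbsErr])

theorem integral_unitStochAbsErr (k : ℕ) :
    ∫ p in (0 : ℝ)..1, unitStochAbsErr k p = 2 / ((k + 1) * (k + 2)) := by
  have h_mirror : ∫ p in (0 : ℝ)..1, (1 - p) ^ k * p = ∫ p in (0 : ℝ)..1, p ^ k * (1 - p) := by
    simpa using
      intervalIntegral.integral_comp_sub_left (a := 0) (b := 1) (fun p : ℝ => p ^ k * (1 - p)) 1
  have h_half : ∫ p in (0 : ℝ)..1, p ^ k * (1 - p) = 1 / ((k + 1) * (k + 2)) := by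
    simp_rw [mul_sub, mul_one, ← pow_succ]
    rw [intervalIntegral.integral_sub ((by fun_prop : Continuous _).intervalIntegrable _ _)
      ((by fun_prop : Continuous _).intervalIntegrable _ _), integral_pow, integral_pow]
    field_simp
    push_cast
    ring
  unfold unitStochAbsErr
  rw [intervalIntegral.integral_add ((by fun_prop : Continuous _).intervalIntegrable _ _)
      ((by fun_prop : Continuous _).intervalIntegrable _ _), h_mirror, h_half]
  ring

theorem integral_unitStochAbsErr_fract (k : ℕ) :
    ∫ u in (0 : ℝ)..1, unitStochAbsErr k (Int.fract u) = 2 / ((k + 1) * (k + 2)) := by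
  rw [← integral_unitStochAbsErr k]
  refine intervalIntegral.integral_congr_ae ?_
  filter_upwards [Measure.ae_ne volume (1 : ℝ)] with u hu hmem
  rw [Set.uIoc_of_le zero_le_one] at hmem
  rw [Int.fract_eq_self.2 ⟨hmem.1.le, lt_of_le_of_ne hmem.2 hu⟩]

section

variable {h : ℝ} (α : ℝ) (k : ℕ)

theorem stochAbsErr_eq (hh : h ≠ 0) (x : ℝ) :
    stochAbsErr h α k x = h ^ k * unitStochAbsErr k (Int.fract ((x - α) / h)) := by
  have h_floor : x - meshFloor h α x = h * Int.fract ((x - α) / h) := by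
    rw [meshFloor, Int.fract]
    field_simp
    ring
  have h_frac : meshFrac h α x = Int.fract ((x - α) / h) := by
    rw [meshFrac, h_floor, mul_div_cancel_left₀ _ hh]
  have h_ceil : meshCeil h α x - x = h * (1 - Int.fract ((x - α) / h)) := by
    rw [meshCeil]
    linarith
  rw [stochAbsErr, h_frac, h_ceil, h_floor, unitStochAbsErr, mul_pow, mul_pow]
  ring

theorem integral_stochAbsErr (hh : h ≠ 0) (a b : ℝ) :
    ∫ x in a..b, stochAbsErr h α k x
      = h ^ (k + 1) * ∫ u in (a - α) / h..(b - α) / h, unitStochAbsErr k (Int.fract u) := by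
  simp_rw [stochAbsErr_eq α k hh, intervalIntegral.integral_const_mul]
  rw [intervalIntegral.integral_comp_sub_right (fun x => unitStochAbsErr k (Int.fract (x / h))),
    intervalIntegral.integral_comp_div (fun u => unitStochAbsErr k (Int.fract u)) hh, smul_eq_mul]
  ring

end

theorem stoch_round_abs_error_int_general
    (h α : ℝ) (hh : 0 < h) (k : ℕ) (a b : ℝ) (hab : a ≤ b) :
    (∫ x in a..b, stochAbsErr h α k x)
      ≤ (2 / ((k : ℝ) ^ 2 + 3 * k + 2)) * (b - a) * h ^ k
        + (8 / ((k : ℝ) ^ 2 + 3 * k + 2)) * h ^ (k + 1) := by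
  have h_unit := ((Int.fract_periodic ℝ).comp (unitStochAbsErr k)).intervalIntegral_le_of_nonneg
    one_pos (fun u => unitStochAbsErr_nonneg k (Int.fract_nonneg u) (Int.fract_lt_one u).le)
    (continuous_unitStochAbsErr_fract k).intervalIntegrable
    (div_le_div_of_nonneg_right (sub_le_sub_right hab α) hh.le)
  have hD : (k : ℝ) ^ 2 + 3 * k + 2 = (k + 1) * (k + 2) := by ring
  calc ∫ x in a..b, stochAbsErr h α k x
      = h ^ (k + 1) * ∫ u in (a - α) / h..(b - α) / h, unitStochAbsErr k (Int.fract u) :=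
        integral_stochAbsErr α k hh.ne' a b
    _ ≤ h ^ (k + 1) * ((((b - α) / h - (a - α) / h) / 1 + 1)
          * ∫ u in (0 : ℝ)..1, unitStochAbsErr k (Int.fract u)) := by
        gcongr
        exact h_unit
    _ = 2 / ((k + 1) * (k + 2)) * (b - a) * h ^ k + 2 / ((k + 1) * (k + 2)) * h ^ (k + 1) := by
        rw [integral_unitStochAbsErr_fract]
        field_simp
        ring
    _ ≤ _ := by
        rw [hD]
        gcongr
        norm_num

theorem stoch_round_abs_error_int
    (h α : ℝ) (hh : 0 < h) (k : ℕ) (hk : 1 ≤ k) (a b : ℝ) (hab : a ≤ b) :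
    (∫ x in a..b, stochAbsErr h α k x)
      ≤ (2 / ((k : ℝ) ^ 2 + 3 * k + 2)) * (b - a) * h ^ k
        + (8 / ((k : ℝ) ^ 2 + 3 * k + 2)) * h ^ (k + 1) :=
  stoch_round_abs_error_int_general h α hh k a b hab
end

section
/- For every odd integer k ≥ 1 and all real numbers a ≤ b, |∫_a^b B_k(x) dx| ≤ ((1 − (k+3)·2^{−(k+1)})/(k² + 3k + 2)) · h^{k+1}. -/
/-!
On a mesh cell, write `u = x - fl(x) ∈ [0, h)`. For odd `k`, `B_k(x) = φ(u)` with
`φ(u) = -u^k (1 - u/h) + (h - u)^k u/h`, a polynomial with an explicit antiderivative `Φ`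
satisfying `Φ(0) = Φ(h)`. Hence `x ↦ Φ(x - fl(x))` is a continuous antiderivative of `B_k` on all
of `ℝ`, and `∫_a^b B_k = Φ(b - fl b) - Φ(a - fl a)`. Since
`φ(u) = u(h - u)/h · ((h - u)^(k-1) - u^(k-1))`, `Φ` increases on `[0, h/2]` and decreases on
`[h/2, h]`, so all values of `Φ` on `[0, h]` lie in `[Φ(0), Φ(h/2)]`, an interval of length
`(1 - (k+3)/2^(k+1)) / ((k+1)(k+2)) · h^(k+1)`.
-/

open MeasureTheory Set

/-- Expected `k`-th signed error of stochastic rounding at `x`. -/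
noncomputable def stochSignedErr (h α : ℝ) (k : ℕ) (x : ℝ) : ℝ :=
  (meshFloor h α x - x) ^ k * (1 - meshFrac h α x)
    + (meshCeil h α x - x) ^ k * meshFrac h α x

section Mesh

variable {h : ℝ} (α : ℝ)

lemma sub_meshFloor_eq_mul_fract (hh : h ≠ 0) (x : ℝ) :
    x - meshFloor h α x = h * Int.fract ((x - α) / h) := by
  rw [meshFloor, Int.fract]
  field_simp
  ring

lemma sub_meshFloor_mem_Ico (hh : 0 < h) (x : ℝ) : x - meshFloor h α x ∈ Ico 0 h := by
  rw [sub_meshFloor_eq_mul_fract α hh.ne']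
  exact ⟨mul_nonneg hh.le (Int.fract_nonneg _), mul_lt_of_lt_one_right hh (Int.fract_lt_one _)⟩

lemma meshFloor_eq_of_sub_mem_Ico (hh : 0 < h) {x y : ℝ}
    (hy : y - meshFloor h α x ∈ Ico 0 h) : meshFloor h α y = meshFloor h α x := by
  have hfloor : ⌊(y - α) / h⌋ = ⌊(x - α) / h⌋ := by
    rw [meshFloor] at hy
    rw [Int.floor_eq_iff, le_div_iff₀ hh, div_lt_iff₀ hh]
    constructor <;> linarith [hy.1, hy.2]
  rw [meshFloor, meshFloor, hfloor]

lemma Continuous.comp_sub_meshFloor (hh : h ≠ 0) {F : ℝ → ℝ} (hF : Continuous F)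
    (hFh : F 0 = F h) : Continuous fun x => F (x - meshFloor h α x) := by
  have hcell : Continuous ((fun t => F (h * t)) ∘ Int.fract) :=
    ContinuousOn.comp_fract'' (by fun_prop) (by simp [hFh])
  simpa only [sub_meshFloor_eq_mul_fract α hh, Function.comp_def] using
    hcell.comp (show Continuous fun x => (x - α) / h by fun_prop)

theorem integral_comp_sub_meshFloor (hh : 0 < h) {φ Φ : ℝ → ℝ}
    (hΦ : ∀ u, HasDerivAt Φ (φ u) u) (hΦh : Φ 0 = Φ h) (hφ : Continuous φ) (hφh : φ 0 = φ h)
    (a b : ℝ) :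
    ∫ x in a..b, φ (x - meshFloor h α x)
      = Φ (b - meshFloor h α b) - Φ (a - meshFloor h α a) := by
  have hΦcont : Continuous Φ := continuous_iff_continuousAt.2 fun u => (hΦ u).continuousAt
  refine intervalIntegral.integral_eq_sub_of_hasDeriv_right
    (hΦcont.comp_sub_meshFloor α hh.ne' hΦh).continuousOn (fun x _ => ?_)
    ((hφ.comp_sub_meshFloor α hh.ne' hφh).intervalIntegrable a b)
  have hcell : HasDerivAt (fun y => Φ (y - meshFloor h α x)) (φ (x - meshFloor h α x)) x := by
    simpa [Function.comp_def] using (hΦ _).comp x ((hasDerivAt_id x).sub_const (meshFloor h α x))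
  refine hcell.hasDerivWithinAt.congr_of_eventuallyEq ?_ rfl
  have hx := sub_meshFloor_mem_Ico α hh x
  filter_upwards [Ioo_mem_nhdsGT (show x < meshFloor h α x + h by linarith [hx.2])] with y hy
  rw [meshFloor_eq_of_sub_mem_Ico α hh ⟨by linarith [hy.1, hx.1], by linarith [hy.2]⟩]

end Mesh

noncomputable def cellSignedErr (h : ℝ) (k : ℕ) (u : ℝ) : ℝ :=
  -u ^ k * (1 - u / h) + (h - u) ^ k * (u / h)

-- The last two terms integrate `(h - u) ^ k * (u / h)` by parts.
noncomputable def cellSignedErrAntideriv (h : ℝ) (k : ℕ) (u : ℝ) : ℝ :=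
  -u ^ (k + 1) / (k + 1) + u ^ (k + 2) / ((k + 2) * h)
    - (h - u) ^ (k + 1) * u / ((k + 1) * h)
    - (h - u) ^ (k + 2) / ((k + 1) * (k + 2) * h)

section Cell

variable {h : ℝ} {k : ℕ}

lemma stochSignedErr_eq_cellSignedErr (hodd : Odd k) (α x : ℝ) :
    stochSignedErr h α k x = cellSignedErr h k (x - meshFloor h α x) := by
  rw [stochSignedErr, cellSignedErr, meshCeil, meshFrac,
    show meshFloor h α x - x = -(x - meshFloor h α x) by ring, hodd.neg_pow]
  ring

lemma continuous_cellSignedErr : Continuous (cellSignedErr h k) := by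
  unfold cellSignedErr
  fun_prop

lemma cellSignedErr_zero (hk : k ≠ 0) : cellSignedErr h k 0 = 0 := by
  simp [cellSignedErr, hk]

lemma cellSignedErr_self (hh : h ≠ 0) (hk : k ≠ 0) : cellSignedErr h k h = 0 := by
  simp [cellSignedErr, hh, hk]

lemma cellSignedErr_eq_mul (hh : h ≠ 0) (hk : k ≠ 0) (u : ℝ) :
    cellSignedErr h k u = u * (h - u) / h * ((h - u) ^ (k - 1) - u ^ (k - 1)) := by
  obtain ⟨j, rfl⟩ := Nat.exists_eq_add_one_of_ne_zero hk
  rw [cellSignedErr, Nat.add_sub_cancel]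
  field_simp
  ring

lemma cellSignedErr_nonneg (hh : 0 < h) (hk : k ≠ 0) {u : ℝ} (hu : u ∈ Icc 0 (h / 2)) :
    0 ≤ cellSignedErr h k u := by
  rw [cellSignedErr_eq_mul hh.ne' hk]
  have hpow := pow_le_pow_left₀ hu.1 (show u ≤ h - u by linarith [hu.2]) (k - 1)
  exact mul_nonneg (div_nonneg (mul_nonneg hu.1 (by linarith [hu.2])) hh.le) (by linarith)

lemma cellSignedErr_nonpos (hh : 0 < h) (hk : k ≠ 0) {u : ℝ} (hu : u ∈ Icc (h / 2) h) :
    cellSignedErr h k u ≤ 0 := by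
  rw [cellSignedErr_eq_mul hh.ne' hk]
  have hpow := pow_le_pow_left₀ (sub_nonneg.2 hu.2) (show h - u ≤ u by linarith [hu.1]) (k - 1)
  exact mul_nonpos_of_nonneg_of_nonpos
    (div_nonneg (mul_nonneg (by linarith [hu.1]) (sub_nonneg.2 hu.2)) hh.le) (by linarith)

lemma hasDerivAt_cellSignedErrAntideriv (hh : h ≠ 0) (u : ℝ) :
    HasDerivAt (cellSignedErrAntideriv h k) (cellSignedErr h k u) u := by
  have hsub : HasDerivAt (fun u : ℝ => h - u) (-1) u := (hasDerivAt_id u).const_sub h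
  have H := ((((hasDerivAt_pow (k + 1) u).neg.div_const (k + 1)).add
      ((hasDerivAt_pow (k + 2) u).div_const ((k + 2) * h))).sub
      ((((hasDerivAt_pow (k + 1) (h - u)).comp u hsub).mul (hasDerivAt_id u)).div_const
        ((k + 1) * h))).sub
      (((hasDerivAt_pow (k + 2) (h - u)).comp u hsub).div_const ((k + 1) * (k + 2) * h))
  refine H.congr_deriv ?_
  simp only [cellSignedErr, Function.comp_apply, id_eq, Nat.add_sub_cancel]
  push_cast
  field_simp
  ring

lemma cellSignedErrAntideriv_self (hh : h ≠ 0) :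
    cellSignedErrAntideriv h k h = cellSignedErrAntideriv h k 0 := by
  simp only [cellSignedErrAntideriv, sub_self, sub_zero]
  field_simp
  ring

lemma monotoneOn_cellSignedErrAntideriv (hh : 0 < h) (hk : k ≠ 0) :
    MonotoneOn (cellSignedErrAntideriv h k) (Icc 0 (h / 2)) :=
  monotoneOn_of_hasDerivWithinAt_nonneg (convex_Icc _ _)
    (fun u _ => (hasDerivAt_cellSignedErrAntideriv hh.ne' u).continuousAt.continuousWithinAt)
    (fun u _ => (hasDerivAt_cellSignedErrAntideriv hh.ne' u).hasDerivWithinAt)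
    (fun _ hu => cellSignedErr_nonneg hh hk (interior_subset hu))

lemma antitoneOn_cellSignedErrAntideriv (hh : 0 < h) (hk : k ≠ 0) :
    AntitoneOn (cellSignedErrAntideriv h k) (Icc (h / 2) h) :=
  antitoneOn_of_hasDerivWithinAt_nonpos (convex_Icc _ _)
    (fun u _ => (hasDerivAt_cellSignedErrAntideriv hh.ne' u).continuousAt.continuousWithinAt)
    (fun u _ => (hasDerivAt_cellSignedErrAntideriv hh.ne' u).hasDerivWithinAt)
    (fun _ hu => cellSignedErr_nonpos hh hk (interior_subset hu))

lemma cellSignedErrAntideriv_mem_Icc (hh : 0 < h) (hk : k ≠ 0) {u : ℝ} (hu : u ∈ Icc 0 h) :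
    cellSignedErrAntideriv h k u
      ∈ Icc (cellSignedErrAntideriv h k 0) (cellSignedErrAntideriv h k (h / 2)) := by
  have hmono := monotoneOn_cellSignedErrAntideriv hh hk
  have hanti := antitoneOn_cellSignedErrAntideriv hh hk
  have hmid : h / 2 ∈ Icc 0 (h / 2) ∩ Icc (h / 2) h :=
    ⟨⟨by positivity, le_rfl⟩, ⟨le_rfl, by linarith⟩⟩
  rcases le_total u (h / 2) with hu' | hu'
  · exact ⟨hmono ⟨le_rfl, hmid.1.1⟩ ⟨hu.1, hu'⟩ hu.1, hmono ⟨hu.1, hu'⟩ hmid.1 hu'⟩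
  · refine ⟨?_, hanti hmid.2 ⟨hu', hu.2⟩ hu'⟩
    rw [← cellSignedErrAntideriv_self hh.ne']
    exact hanti ⟨hu', hu.2⟩ ⟨hmid.2.2, le_rfl⟩ hu.2

lemma cellSignedErrAntideriv_half_sub_zero (hh : h ≠ 0) :
    cellSignedErrAntideriv h k (h / 2) - cellSignedErrAntideriv h k 0
      = (1 - ((k : ℝ) + 3) / 2 ^ (k + 1)) / ((k : ℝ) ^ 2 + 3 * k + 2) * h ^ (k + 1) := by
  simp only [cellSignedErrAntideriv, sub_zero, show h - h / 2 = h / 2 by ring, div_pow,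
    pow_succ h (k + 1), pow_succ (2 : ℝ) (k + 1)]
  field_simp
  ring

end Cell

theorem stoch_round_signed_error_int_general
    (h α : ℝ) (hh : 0 < h) (k : ℕ) (hodd : Odd k)
    (a b : ℝ) :
    |∫ x in a..b, stochSignedErr h α k x|
      ≤ ((1 - ((k : ℝ) + 3) / 2 ^ (k + 1)) / ((k : ℝ) ^ 2 + 3 * k + 2)) * h ^ (k + 1) := by
  have hk : k ≠ 0 := hodd.pos.ne'
  have hcell (x : ℝ) := cellSignedErrAntideriv_mem_Icc hh hk
    (Ico_subset_Icc_self (sub_meshFloor_mem_Ico α hh x))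
  simp only [stochSignedErr_eq_cellSignedErr hodd α]
  rw [integral_comp_sub_meshFloor α hh (hasDerivAt_cellSignedErrAntideriv hh.ne')
    (cellSignedErrAntideriv_self hh.ne').symm continuous_cellSignedErr
    (by rw [cellSignedErr_zero hk, cellSignedErr_self hh.ne' hk]),
    ← cellSignedErrAntideriv_half_sub_zero hh.ne']
  exact abs_sub_le_of_le_of_le (hcell b).1 (hcell b).2 (hcell a).1 (hcell a).2

theorem stoch_round_signed_error_int
    (h α : ℝ) (hh : 0 < h) (k : ℕ) (hk : 1 ≤ k) (hodd : Odd k)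
    (a b : ℝ) (hab : a ≤ b) :
    |∫ x in a..b, stochSignedErr h α k x|
      ≤ ((1 - ((k : ℝ) + 3) / 2 ^ (k + 1)) / ((k : ℝ) ^ 2 + 3 * k + 2)) * h ^ (k + 1) :=
  stoch_round_signed_error_int_general h α hh k hodd a b
end

section
/- Let X₁, …, X_n be independent, identically distributed copies of X and define the sample mean of the rounded data Z := (rd(X₁) + ⋯ + rd(X_n))/n. Then for every real t > δ, ℙ[|Z − E[X]| ≥ t] ≤ (1/n) · ((√(Var[X]) + δ)/(t − δ))². -/
open MeasureTheory ProbabilityTheory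

/-!
The rounded sample mean `Z` is the mean of `n` i.i.d. copies of `rd ∘ X`, so Chebyshev's
inequality controls its deviation from `E[rd ∘ X]` by `Var[rd ∘ X] / n`. Rounding moves every
sample by at most `δ`, hence moves the mean by at most `δ` (which costs `δ` in the threshold `t`)
and the standard deviation by at most `δ`: by Minkowski's inequality for the centred variables
in `L²`, `σ(rd ∘ X) ≤ σ(X) + σ(rd ∘ X - X)`, and Popoviciu's inequality gives
`σ(rd ∘ X - X) ≤ δ`.
-/

namespace ProbabilityTheory

variable {Ω : Type*} [MeasurableSpace Ω] {μ : Measure Ω}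

lemma evariance_eq_eLpNorm_sq (X : Ω → ℝ) :
    eVar[X; μ] = eLpNorm (fun ω => X ω - μ[X]) 2 μ ^ 2 := by
  rw [evariance, eLpNorm_eq_lintegral_rpow_enorm_toReal two_ne_zero ENNReal.ofNat_ne_top,
    ← ENNReal.rpow_natCast _ 2, ← ENNReal.rpow_mul]
  norm_num

lemma sqrt_variance_eq_toReal_eLpNorm (X : Ω → ℝ) :
    √(Var[X; μ]) = (eLpNorm (fun ω => X ω - μ[X]) 2 μ).toReal := by
  rw [variance, evariance_eq_eLpNorm_sq, ENNReal.toReal_pow, Real.sqrt_sq ENNReal.toReal_nonneg]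

section SampleMean

variable {ι : Type*} [Fintype ι] {X : ι → Ω → ℝ} {Y : Ω → ℝ}

lemma integral_sum_div_card_of_identDistrib [Nonempty ι] (hY : Integrable Y μ)
    (hXY : ∀ i, IdentDistrib (X i) Y μ μ) :
    μ[fun ω => (∑ i, X i ω) / Fintype.card ι] = μ[Y] := by
  have hX : ∀ i ∈ Finset.univ, Integrable (X i) μ := fun i _ => (hXY i).integrable_iff.2 hY
  rw [integral_div, integral_finsetSum _ hX]
  simp [(hXY _).integral_eq]

lemma variance_sum_div_card_of_iIndepFun (hY : MemLp Y 2 μ) (hindep : iIndepFun X μ)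
    (hXY : ∀ i, IdentDistrib (X i) Y μ μ) :
    Var[fun ω => (∑ i, X i ω) / Fintype.card ι; μ] = Var[Y; μ] / Fintype.card ι := by
  have hX : ∀ i ∈ Finset.univ, MemLp (X i) 2 μ := fun i _ => (hXY i).memLp_iff.2 hY
  have hsum : Var[∑ i, X i; μ] = Fintype.card ι * Var[Y; μ] := by
    rw [IndepFun.variance_sum hX fun i _ j _ hij => hindep.indepFun hij]
    simp [(hXY _).variance_eq]
  simp_rw [div_eq_inv_mul _ (Fintype.card ι : ℝ), variance_const_mul, ← Finset.sum_apply, hsum]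
  rcases eq_or_ne (Fintype.card ι : ℝ) 0 with hcard | hcard
  · simp [hcard]
  · field_simp

end SampleMean

section FiniteMeasure

variable [IsFiniteMeasure μ]

lemma sqrt_variance_add_le {X Y : Ω → ℝ} (hX : MemLp X 2 μ) (hY : MemLp Y 2 μ) :
    √(Var[fun ω => X ω + Y ω; μ]) ≤ √(Var[X; μ]) + √(Var[Y; μ]) := by
  have hXc : MemLp (fun ω => X ω - μ[X]) 2 μ := hX.sub (memLp_const _)
  have hYc : MemLp (fun ω => Y ω - μ[Y]) 2 μ := hY.sub (memLp_const _)
  have hcenter : (fun ω => X ω + Y ω - μ[fun ω => X ω + Y ω])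
      = (fun ω => X ω - μ[X]) + (fun ω => Y ω - μ[Y]) := by
    rw [integral_add (hX.integrable one_le_two) (hY.integrable one_le_two)]
    ext ω
    simp only [Pi.add_apply]
    ring
  rw [sqrt_variance_eq_toReal_eLpNorm, sqrt_variance_eq_toReal_eLpNorm,
    sqrt_variance_eq_toReal_eLpNorm, hcenter, ← ENNReal.toReal_add hXc.2.ne hYc.2.ne]
  exact ENNReal.toReal_mono (ENNReal.add_ne_top.2 ⟨hXc.2.ne, hYc.2.ne⟩)
    (eLpNorm_add_le hXc.1 hYc.1 one_le_two)

lemma memLp_of_abs_sub_le {X Y : Ω → ℝ} {p : ENNReal} {δ : ℝ} (hX : MemLp X p μ)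
    (hY : AEStronglyMeasurable Y μ) (h : ∀ᵐ ω ∂μ, |Y ω - X ω| ≤ δ) : MemLp Y p μ := by
  simpa using hX.add (MemLp.of_bound (hY.sub hX.1) δ h)

lemma measureReal_le_abs_sub_le_variance_div_sq {X : Ω → ℝ} (hX : MemLp X 2 μ) {c δ t : ℝ}
    (hc : |μ[X] - c| ≤ δ) (ht : δ < t) :
    μ.real {ω | t ≤ |X ω - c|} ≤ Var[X; μ] / (t - δ) ^ 2 := by
  have hsub : {ω | t ≤ |X ω - c|} ⊆ {ω | t - δ ≤ |X ω - μ[X]|} := fun ω hω => by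
    have := abs_sub_le (X ω) μ[X] c
    simp only [Set.mem_ofPred_eq] at hω ⊢
    linarith
  exact ENNReal.toReal_le_of_le_ofReal (div_nonneg (variance_nonneg _ _) (sq_nonneg _))
    ((measure_mono hsub).trans (meas_ge_le_variance_div_sq hX (by linarith)))

end FiniteMeasure

section ProbabilityMeasure

variable [IsProbabilityMeasure μ]

lemma abs_integral_sub_integral_le {X Y : Ω → ℝ} {δ : ℝ} (hX : Integrable X μ)
    (hY : Integrable Y μ) (h : ∀ᵐ ω ∂μ, |Y ω - X ω| ≤ δ) : |μ[Y] - μ[X]| ≤ δ := by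
  rw [← integral_sub hY hX]
  simpa using norm_integral_le_of_norm_le_const (μ := μ) (f := fun ω => Y ω - X ω) h

lemma sqrt_variance_le_of_abs_le {X : Ω → ℝ} {δ : ℝ} (hX : AEMeasurable X μ)
    (h : ∀ᵐ ω ∂μ, |X ω| ≤ δ) : √(Var[X; μ]) ≤ δ := by
  obtain ⟨ω, hω⟩ := h.exists
  have hδ : 0 ≤ δ := (abs_nonneg _).trans hω
  have hvar := variance_le_sq_of_bounded (h.mono fun ω hω => abs_le.1 hω) hX
  rw [Real.sqrt_le_left hδ]
  linarith

lemma sqrt_variance_le_add_of_abs_sub_le {X Y : Ω → ℝ} {δ : ℝ} (hX : MemLp X 2 μ)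
    (hY : AEStronglyMeasurable Y μ) (h : ∀ᵐ ω ∂μ, |Y ω - X ω| ≤ δ) :
    √(Var[Y; μ]) ≤ √(Var[X; μ]) + δ := by
  have hD : MemLp (fun ω => Y ω - X ω) 2 μ := MemLp.of_bound (hY.sub hX.1) δ h
  calc √(Var[Y; μ]) = √(Var[fun ω => X ω + (Y ω - X ω); μ]) := by simp only [add_sub_cancel]
    _ ≤ √(Var[X; μ]) + √(Var[fun ω => Y ω - X ω; μ]) := sqrt_variance_add_le hX hD
    _ ≤ √(Var[X; μ]) + δ := by
      gcongr
      exact sqrt_variance_le_of_abs_le hD.aemeasurable h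

end ProbabilityMeasure

end ProbabilityTheory

theorem rounded_sample_mean_chebyshev_general
    {Ω : Type*} [MeasurableSpace Ω] (P : Measure Ω) [IsProbabilityMeasure P]
    (X : Ω → ℝ) (hX2 : MemLp X 2 P)
    (rd : ℝ → ℝ) (hrd : Measurable rd)
    (δ : ℝ) (hbound : ∀ x : ℝ, |rd x - x| ≤ δ)
    (n : ℕ) (hn : 1 ≤ n)
    (Xi : Fin n → Ω → ℝ)
    (h_indep : iIndepFun Xi P)
    (h_ident : ∀ i, IdentDistrib (Xi i) X P P)
    (t : ℝ) (ht : δ < t) :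
    (P {ω | t ≤ |(∑ i, rd (Xi i ω)) / n - ∫ ω', X ω' ∂P|}).toReal
      ≤ (1 / n) * ((Real.sqrt (variance X P) + δ) / (t - δ)) ^ 2 := by
  have : Nonempty (Fin n) := ⟨⟨0, hn⟩⟩
  have hclose : ∀ᵐ ω ∂P, |rd (X ω) - X ω| ≤ δ := ae_of_all _ fun ω => hbound (X ω)
  have hrdX_meas : AEStronglyMeasurable (fun ω => rd (X ω)) P :=
    (hrd.comp_aemeasurable hX2.aemeasurable).aestronglyMeasurable
  have hrdX : MemLp (fun ω => rd (X ω)) 2 P := memLp_of_abs_sub_le hX2 hrdX_meas hclose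
  have hident : ∀ i, IdentDistrib (fun ω => rd (Xi i ω)) (fun ω => rd (X ω)) P P :=
    fun i => (h_ident i).comp hrd
  have hmean := integral_sum_div_card_of_identDistrib (hrdX.integrable one_le_two) hident
  have hvar := variance_sum_div_card_of_iIndepFun (X := fun i ω => rd (Xi i ω)) hrdX
    (h_indep.comp _ fun _ => hrd) hident
  have hsd := sqrt_variance_le_add_of_abs_sub_le hX2 hrdX_meas hclose
  simp only [Fintype.card_fin] at hmean hvar
  have hS : MemLp (fun ω => (∑ i, rd (Xi i ω)) / n) 2 P := by
    simpa only [div_eq_mul_inv] using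
      (memLp_finsetSum _ fun i _ => (hident i).memLp_iff.2 hrdX).mul_const (n⁻¹ : ℝ)
  have hbias : |P[fun ω => (∑ i, rd (Xi i ω)) / n] - P[X]| ≤ δ := by
    rw [hmean]
    exact abs_integral_sub_integral_le (hX2.integrable one_le_two) (hrdX.integrable one_le_two)
      hclose
  calc (P {ω | t ≤ |(∑ i, rd (Xi i ω)) / n - ∫ ω', X ω' ∂P|}).toReal
      ≤ Var[fun ω => (∑ i, rd (Xi i ω)) / n; P] / (t - δ) ^ 2 :=
        measureReal_le_abs_sub_le_variance_div_sq hS hbias ht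
    _ = (1 / n) * (√(Var[fun ω => rd (X ω); P]) / (t - δ)) ^ 2 := by
        rw [hvar, div_pow, Real.sq_sqrt (variance_nonneg _ _)]
        ring
    _ ≤ (1 / n) * ((Real.sqrt (variance X P) + δ) / (t - δ)) ^ 2 := by
        gcongr

theorem rounded_sample_mean_chebyshev
    {Ω : Type*} [MeasurableSpace Ω] (P : Measure Ω) [IsProbabilityMeasure P]
    (X : Ω → ℝ) (hX : Measurable X) (hX2 : MemLp X 2 P)
    (rd : ℝ → ℝ) (hrd : Measurable rd)
    (δ : ℝ) (hδ : 0 ≤ δ) (hbound : ∀ x : ℝ, |rd x - x| ≤ δ)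
    (n : ℕ) (hn : 1 ≤ n)
    (Xi : Fin n → Ω → ℝ) (hXi_meas : ∀ i, Measurable (Xi i))
    (h_indep : iIndepFun Xi P)
    (h_ident : ∀ i, IdentDistrib (Xi i) X P P)
    (t : ℝ) (ht : δ < t) :
    (P {ω | t ≤ |(∑ i, rd (Xi i ω)) / n - ∫ ω', X ω' ∂P|}).toReal
      ≤ (1 / n) * ((Real.sqrt (variance X P) + δ) / (t - δ)) ^ 2 :=
  rounded_sample_mean_chebyshev_general P X hX2 rd hrd δ hbound n hn Xi h_indep h_ident t ht
end
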